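/- arXiv:1503.06447 — 7 statements merged into one kernel-verified Lean document; each statement's English description precedes it below -/
import Mathlib

section
/- Let n ≥ r ≥ 1 be integers and let k be a real number with k ∉ {0,1,…,r−1}. Then every polynomial P ∈ ℝ[x_1,…,x_n] of degree at most r can be written as P = P₁ + Σ_{i=1}^n P_{2i}·(x_i² − x_i) + P₃·(Σ_{i=1}^n x_i − k), where P₁ is multilinear and homogeneous of degree r, each P_{2i} has degree at most r−2, and P₃ has degree at most r−1. -/
open Finset MvPolynomial

/-!
Modulo the relations `Xᵢ² = Xᵢ` every monomial reduces to a multilinear one of no larger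
degree, so only multilinear monomials `X^S` with `|S| ≤ r` need treatment. Multiplying `X^S` by
`∑ᵢ Xᵢ - k` and reducing with `Xⱼ² = Xⱼ` for `j ∈ S` gives
`X^S (∑ᵢ Xᵢ - k) ≡ ∑_{j ∉ S} X^{S ∪ {j}} + (|S| - k) X^S` modulo the `Xⱼ² - Xⱼ`,
and since `|S| ≠ k` this expresses `X^S` through multilinear monomials of degree `|S| + 1`.
Downward induction on `|S|` ends at multilinear monomials of degree exactly `r`.
-/

theorem Finsupp.degree_add_single {σ : Type*} (m : σ →₀ ℕ) (i : σ) (e : ℕ) :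
    (m + single i e).degree = m.degree + e := by
  rw [map_add, degree_single]

theorem Finsupp.degree_eq_card_support_of_le_one {σ : Type*} {m : σ →₀ ℕ}
    (hm : ∀ i, m i ≤ 1) : m.degree = #m.support := by
  rw [degree_apply, card_eq_sum_ones]
  exact Finset.sum_congr rfl fun i hi => le_antisymm (hm i) (Nat.one_le_iff_ne_zero.mpr
    (mem_support_iff.mp hi))

namespace MvPolynomial

variable {σ R : Type*}

theorem eq_zero_or_totalDegree_add_le_of_mem_restrictSupport [CommSemiring R]
    {p : MvPolynomial σ R} {c r : ℕ} (hp : p ∈ restrictSupport R {m | m.degree + c ≤ r}) :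
    p = 0 ∨ p.totalDegree + c ≤ r := by
  rcases eq_or_ne p 0 with rfl | hp0
  · exact Or.inl rfl
  obtain ⟨m, hm, hmax⟩ := Finset.exists_mem_eq_sup _ (support_nonempty.mpr hp0)
    fun m : σ →₀ ℕ => m.sum fun _ e => e
  exact Or.inr (by rw [totalDegree, hmax]; exact hp hm)

theorem monomial_add_single_two [CommRing R] (m : σ →₀ ℕ) (i : σ) :
    monomial (m + Finsupp.single i 2) (1 : R)
      = monomial m 1 * (X i ^ 2 - X i) + monomial (m + Finsupp.single i 1) 1 := by
  rw [mul_sub, X_pow_eq_monomial, X, monomial_mul, monomial_mul, one_mul, sub_add_cancel]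

variable [Fintype σ]

section CommRing

variable [CommRing R]

variable (σ R) in
/-- `Xᵢ² - Xᵢ` and `∑ᵢ Xᵢ - k` cut out the Boolean slice `{x ∈ {0,1}^σ | ∑ᵢ xᵢ = k}`. -/
def sliceDecomposable (r : ℕ) (k : R) : Submodule R (MvPolynomial σ R) where
  carrier := {P | ∃ (P₁ : MvPolynomial σ R) (P₂ : σ → MvPolynomial σ R) (P₃ : MvPolynomial σ R),
    P = P₁ + ∑ i, P₂ i * (X i ^ 2 - X i) + P₃ * (∑ i, X i - C k) ∧
    P₁ ∈ homogeneousSubmodule σ R r ⊓ restrictSupport R {m | ∀ i, m i ≤ 1} ∧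
    (∀ i, P₂ i ∈ restrictSupport R {m | m.degree + 2 ≤ r}) ∧
    P₃ ∈ restrictSupport R {m | m.degree + 1 ≤ r}}
  zero_mem' := ⟨0, 0, 0, by simp, zero_mem _, fun _ => zero_mem _, zero_mem _⟩
  add_mem' := by
    rintro _ _ ⟨P₁, P₂, P₃, rfl, h₁, h₂, h₃⟩ ⟨Q₁, Q₂, Q₃, rfl, h₁', h₂', h₃'⟩
    refine ⟨P₁ + Q₁, P₂ + Q₂, P₃ + Q₃, ?_, add_mem h₁ h₁', fun i => add_mem (h₂ i) (h₂' i),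
      add_mem h₃ h₃'⟩
    simp only [Pi.add_apply, add_mul, sum_add_distrib]
    ring
  smul_mem' := by
    rintro c _ ⟨P₁, P₂, P₃, rfl, h₁, h₂, h₃⟩
    exact ⟨c • P₁, c • P₂, c • P₃, by simp only [smul_add, Pi.smul_apply, smul_mul_assoc, smul_sum],
      Submodule.smul_mem _ c h₁, fun i => Submodule.smul_mem _ c (h₂ i), Submodule.smul_mem _ c h₃⟩

variable {r : ℕ} {k : R}

theorem mem_sliceDecomposable_of_isHomogeneous {P : MvPolynomial σ R}
    (hP : P.IsHomogeneous r) (hml : ∀ m ∈ P.support, ∀ i, m i ≤ 1) :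
    P ∈ sliceDecomposable σ R r k :=
  ⟨P, 0, 0, by simp, ⟨hP, fun m hm => hml m hm⟩, fun _ => zero_mem _, zero_mem _⟩

theorem mul_sq_sub_mem_sliceDecomposable (i : σ) {Q : MvPolynomial σ R}
    (hQ : Q ∈ restrictSupport R {m | m.degree + 2 ≤ r}) :
    Q * (X i ^ 2 - X i) ∈ sliceDecomposable σ R r k := by
  classical
  refine ⟨0, Pi.single i Q, 0, by simp [Pi.single_apply], zero_mem _, fun j => ?_, zero_mem _⟩
  rcases eq_or_ne j i with rfl | hj
  · simpa using hQ
  · simp [hj]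

theorem mul_sum_X_sub_C_mem_sliceDecomposable {Q : MvPolynomial σ R}
    (hQ : Q ∈ restrictSupport R {m | m.degree + 1 ≤ r}) :
    Q * (∑ i, X i - C k) ∈ sliceDecomposable σ R r k :=
  ⟨0, 0, Q, by simp, zero_mem _, fun _ => zero_mem _, hQ⟩

theorem monomial_mul_sum_X_sub_C_of_le_one [DecidableEq σ] (k : R) {m : σ →₀ ℕ}
    (hm : ∀ i, m i ≤ 1) :
    monomial m (1 : R) * (∑ i, X i - C k)
      = ∑ i ∈ m.support, monomial (m.erase i) 1 * (X i ^ 2 - X i)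
        + ∑ i ∈ m.supportᶜ, monomial (m + Finsupp.single i 1) 1
        + ((m.degree : R) - k) • monomial m 1 := by
  have hX : ∀ i, monomial m (1 : R) * X i = monomial (m + Finsupp.single i 1) 1 := fun i => by
    rw [X, monomial_mul, mul_one]
  have hsupp : ∀ i ∈ m.support, monomial (m + Finsupp.single i 1) (1 : R)
      = monomial (m.erase i) 1 * (X i ^ 2 - X i) + monomial m 1 := fun i hi => by
    have hm' : m.erase i + Finsupp.single i 1 = m := by
      rw [← le_antisymm (hm i) (Nat.one_le_iff_ne_zero.mpr (Finsupp.mem_support_iff.mp hi)),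
        Finsupp.erase_add_single]
    rw [← hm', add_assoc, ← Finsupp.single_add, monomial_add_single_two, hm']
  rw [mul_sub, mul_sum, ← sum_add_sum_compl m.support]
  simp only [hX]
  rw [sum_congr rfl hsupp, sum_add_distrib, sum_const, Finsupp.degree_eq_card_support_of_le_one hm,
    sub_smul, Nat.cast_smul_eq_nsmul, mul_comm, ← smul_eq_C_mul]
  abel

end CommRing

section Field

variable [Field R] {r : ℕ} {k : R}

theorem monomial_mem_sliceDecomposable_of_le_one (hk : ∀ i < r, (i : R) ≠ k) {m : σ →₀ ℕ}
    (hm : ∀ i, m i ≤ 1) (hdeg : m.degree ≤ r) :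
    monomial m (1 : R) ∈ sliceDecomposable σ R r k := by
  classical
  obtain ⟨d, hd⟩ := Nat.exists_eq_add_of_le hdeg
  induction d generalizing m with
  | zero =>
    refine mem_sliceDecomposable_of_isHomogeneous (isHomogeneous_monomial _ hd.symm)
      fun m' hm' => ?_
    rwa [Finset.mem_singleton.mp (support_monomial_subset hm')]
  | succ d ih =>
    have hmul : monomial m (1 : R) * (∑ i, X i - C k) ∈ sliceDecomposable σ R r k :=
      mul_sum_X_sub_C_mem_sliceDecomposable
        ((monomial_mem_restrictSupport R).mpr (.inl (show m.degree + 1 ≤ r by omega)))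
    have hlower : ∑ i ∈ m.support, monomial (m.erase i) (1 : R) * (X i ^ 2 - X i)
        ∈ sliceDecomposable σ R r k := by
      refine sum_mem fun i hi => mul_sq_sub_mem_sliceDecomposable i ?_
      have hdeg_erase := Finsupp.degree_add_single (m.erase i) i (m i)
      rw [Finsupp.erase_add_single] at hdeg_erase
      have := Finsupp.mem_support_iff.mp hi
      exact (monomial_mem_restrictSupport R).mpr (.inl (show _ + 2 ≤ r by omega))
    have hraise : ∑ i ∈ m.supportᶜ, monomial (m + Finsupp.single i 1) (1 : R)
        ∈ sliceDecomposable σ R r k := by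
      refine sum_mem fun i hi => ih (fun j => ?_) (by rw [Finsupp.degree_add_single]; omega)
        (by rw [Finsupp.degree_add_single]; omega)
      rcases eq_or_ne j i with rfl | hj
      · simp [Finsupp.notMem_support_iff.mp (mem_compl.mp hi)]
      · simpa [Finsupp.single_apply, hj.symm] using hm j
    rw [monomial_mul_sum_X_sub_C_of_le_one k hm] at hmul
    exact (Submodule.smul_mem_iff _ (sub_ne_zero.mpr (hk _ (by omega)))).mp
      ((Submodule.add_mem_iff_right _ (add_mem hlower hraise)).mp hmul)

theorem monomial_mem_sliceDecomposable (hk : ∀ i < r, (i : R) ≠ k) {m : σ →₀ ℕ}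
    (hdeg : m.degree ≤ r) : monomial m (1 : R) ∈ sliceDecomposable σ R r k := by
  induction h : m.degree using Nat.strong_induction_on generalizing m with
  | _ d ih =>
  by_cases hm : ∀ i, m i ≤ 1
  · exact monomial_mem_sliceDecomposable_of_le_one hk hm hdeg
  push Not at hm
  obtain ⟨i, hi⟩ := hm
  obtain ⟨m, rfl⟩ : ∃ m', m = m' + Finsupp.single i 2 :=
    ⟨m - Finsupp.single i 2, (tsub_add_cancel_of_le (Finsupp.single_le_iff.mpr hi)).symm⟩
  rw [Finsupp.degree_add_single] at hdeg h
  rw [monomial_add_single_two]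
  exact add_mem (mul_sq_sub_mem_sliceDecomposable i
      ((monomial_mem_restrictSupport R).mpr (.inl hdeg)))
    (ih (m.degree + 1) (by omega) (by rw [Finsupp.degree_add_single]; omega)
      (Finsupp.degree_add_single m i 1))

theorem mem_sliceDecomposable_of_totalDegree_le (hk : ∀ i < r, (i : R) ≠ k)
    {P : MvPolynomial σ R} (hP : P.totalDegree ≤ r) : P ∈ sliceDecomposable σ R r k := by
  rw [P.as_sum]
  refine sum_mem fun m hm => ?_
  rw [← mul_one (coeff m P), ← smul_eq_mul, ← smul_monomial]
  exact Submodule.smul_mem _ _ (monomial_mem_sliceDecomposable hk ((le_totalDegree hm).trans hP))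

end Field

end MvPolynomial

theorem multilinear_homogeneous_decomposition_general (n r : ℕ)
    (k : ℝ) (hk : ∀ i : ℕ, i < r → (i : ℝ) ≠ k)
    (P : MvPolynomial (Fin n) ℝ) (hP : P.totalDegree ≤ r) :
    ∃ (P₁ : MvPolynomial (Fin n) ℝ) (P₂ : Fin n → MvPolynomial (Fin n) ℝ)
      (P₃ : MvPolynomial (Fin n) ℝ),
      P = P₁ + (∑ i, P₂ i * (X i ^ 2 - X i)) + P₃ * (∑ i, X i - C k) ∧
      P₁.IsHomogeneous r ∧
      (∀ m ∈ P₁.support, ∀ i : Fin n, m i ≤ 1) ∧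
      (∀ i, P₂ i = 0 ∨ (P₂ i).totalDegree + 2 ≤ r) ∧
      (P₃ = 0 ∨ P₃.totalDegree + 1 ≤ r) := by
  obtain ⟨P₁, P₂, P₃, hP_eq, ⟨hP₁_hom, hP₁_ml⟩, hP₂, hP₃⟩ :=
    mem_sliceDecomposable_of_totalDegree_le hk hP
  exact ⟨P₁, P₂, P₃, hP_eq, hP₁_hom, fun m hm => hP₁_ml hm,
    fun i => eq_zero_or_totalDegree_add_le_of_mem_restrictSupport (hP₂ i),
    eq_zero_or_totalDegree_add_le_of_mem_restrictSupport hP₃⟩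

/-- Let `n ≥ r ≥ 1` and let `k ∈ ℝ` with `k ∉ {0,1,…,r−1}`. Every
polynomial `P ∈ ℝ[x₁,…,x_n]` of degree at most `r` can be written as
`P = P₁ + Σᵢ P₂ᵢ·(xᵢ² − xᵢ) + P₃·(Σᵢ xᵢ − k)` where `P₁` is multilinear (every variable
has individual degree at most one) and homogeneous of degree `r`, each `P₂ᵢ` has degree
at most `r − 2` (i.e. is zero or has `totalDegree + 2 ≤ r`), and `P₃` has degree at most
`r − 1` (i.e. is zero or has `totalDegree + 1 ≤ r`). -/
theorem multilinear_homogeneous_decomposition (n r : ℕ) (hr : 1 ≤ r) (hrn : r ≤ n)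
    (k : ℝ) (hk : ∀ i : ℕ, i < r → (i : ℝ) ≠ k)
    (P : MvPolynomial (Fin n) ℝ) (hP : P.totalDegree ≤ r) :
    ∃ (P₁ : MvPolynomial (Fin n) ℝ) (P₂ : Fin n → MvPolynomial (Fin n) ℝ)
      (P₃ : MvPolynomial (Fin n) ℝ),
      P = P₁ + (∑ i, P₂ i * (X i ^ 2 - X i)) + P₃ * (∑ i, X i - C k) ∧
      P₁.IsHomogeneous r ∧
      (∀ m ∈ P₁.support, ∀ i : Fin n, m i ≤ 1) ∧
      (∀ i, P₂ i = 0 ∨ (P₂ i).totalDegree + 2 ≤ r) ∧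
      (P₃ = 0 ∨ P₃.totalDegree + 1 ≤ r) :=
  multilinear_homogeneous_decomposition_general n r k hk P hP
end

section
/- Let G be a graph on [n] and let r, k be positive integers with 2r ≤ n. If the matrix M' is positive semidefinite, then the matrix M_G is positive semidefinite. -/
open Finset

/-- `deg_G(I)`: the number of sets `S ⊆ [n]` with `I ⊆ S`, `|S| = 2r`, and `S` a clique
of `G`. -/
noncomputable def degG {n : ℕ} (G : SimpleGraph (Fin n)) (r : ℕ) (I : Finset (Fin n)) : ℕ :=
  Nat.card {S : Finset (Fin n) // I ⊆ S ∧ S.card = 2 * r ∧ G.IsClique (S : Set (Fin n))}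

/-- The matrix `M_G`, indexed by the `r`-element subsets of `[n]`, with
`M_G(I,J) = deg_G(I∪J) · C(k,|I∪J|)/C(2r,|I∪J|)`. -/
noncomputable def MG {n : ℕ} (G : SimpleGraph (Fin n)) (r k : ℕ) :
    Matrix {I : Finset (Fin n) // I.card = r} {I : Finset (Fin n) // I.card = r} ℝ :=
  fun I J => (degG G r (I.1 ∪ J.1) : ℝ) * (Nat.choose k (I.1 ∪ J.1).card : ℝ)
      / (Nat.choose (2 * r) (I.1 ∪ J.1).card : ℝ)

/-- `β(i) = C(k,2r−i)/C(2r,2r−i)`. -/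
noncomputable def betaCoeff (r k i : ℕ) : ℝ :=
  (Nat.choose k (2 * r - i) : ℝ) / (Nat.choose (2 * r) (2 * r - i) : ℝ)

/-- Every pair in `E(T) ∖ (E(I) ∪ E(J))` is an edge of `G`: every two distinct vertices
of `T` that do not both lie in `I` nor both lie in `J` are adjacent in `G`. -/
def pairsPresent {n : ℕ} (G : SimpleGraph (Fin n)) (T I J : Finset (Fin n)) : Prop :=
  ∀ u v : Fin n, u ∈ T → v ∈ T → u ≠ v →
    ¬(u ∈ I ∧ v ∈ I) → ¬(u ∈ J ∧ v ∈ J) → G.Adj u v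

open scoped Classical in
/-- The matrix `M_T`: `M_T(I,J) = β(|I∩J|)` if `I ∪ J ⊆ T` and every pair in
`E(T) ∖ (E(I) ∪ E(J))` is an edge of `G`, and `0` otherwise. -/
noncomputable def MTmat {n : ℕ} (G : SimpleGraph (Fin n)) (r k : ℕ) (T : Finset (Fin n)) :
    Matrix {I : Finset (Fin n) // I.card = r} {I : Finset (Fin n) // I.card = r} ℝ :=
  fun I J =>
    if I.1 ∪ J.1 ⊆ T ∧ pairsPresent G T I.1 J.1 then betaCoeff r k (I.1 ∩ J.1).card else 0

/-- `M' = Σ_{T ⊆ [n], |T| = 2r} M_T`. -/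
noncomputable def Mprime {n : ℕ} (G : SimpleGraph (Fin n)) (r k : ℕ) :
    Matrix {I : Finset (Fin n) // I.card = r} {I : Finset (Fin n) // I.card = r} ℝ :=
  ∑ T ∈ Finset.univ.filter (fun T : Finset (Fin n) => T.card = 2 * r), MTmat G r k T

/-!
Let `D` be the diagonal `0/1` matrix selecting the `r`-sets that are cliques of `G`. Then
`M_G = D M' D`: if `I` or `J` is not a clique, no clique contains `I ∪ J`, so both sides vanish;
if both are cliques, the condition on `T` in `M_T(I,J)` says exactly that `T ⊇ I ∪ J` is a
clique, so `M'(I,J) = deg_G(I ∪ J) β(|I ∩ J|)`, and `β(|I ∩ J|)` is the weight of `M_G(I,J)`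
because `|I ∪ J| + |I ∩ J| = 2r`. Congruence by `D` preserves positive semidefiniteness.
-/

section Matrix

variable {ι : Type*} [Fintype ι] [DecidableEq ι]

theorem Matrix.PosSemidef.diagonal_mul_mul_diagonal {A : Matrix ι ι ℝ} (hA : A.PosSemidef)
    (d : ι → ℝ) : (Matrix.diagonal d * A * Matrix.diagonal d).PosSemidef := by
  simpa [Matrix.diagonal_conjTranspose, Pi.star_def] using
    hA.conjTranspose_mul_mul_same (Matrix.diagonal d)

end Matrix

theorem betaCoeff_card_inter {α : Type*} [DecidableEq α] {r : ℕ} (k : ℕ) {I J : Finset α}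
    (hI : I.card = r) (hJ : J.card = r) :
    betaCoeff r k (I ∩ J).card = (k.choose (I ∪ J).card : ℝ) / ((2 * r).choose (I ∪ J).card) := by
  have hcard := card_union_add_card_inter I J
  rw [betaCoeff, show 2 * r - (I ∩ J).card = (I ∪ J).card by omega]

abbrev rSet (n r : ℕ) : Type := {I : Finset (Fin n) // I.card = r}

variable {n : ℕ} (G : SimpleGraph (Fin n)) (r k : ℕ)

open scoped Classical in
theorem degG_eq_card_filter (K : Finset (Fin n)) :
    degG G r K = #{S ∈ univ | K ⊆ S ∧ S.card = 2 * r ∧ G.IsClique (S : Set (Fin n))} := by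
  rw [degG, Nat.card_eq_fintype_card, Fintype.card_subtype]

theorem degG_eq_zero_of_not_isClique {I K : Finset (Fin n)} (hIK : I ⊆ K)
    (hI : ¬ G.IsClique (I : Set (Fin n))) : degG G r K = 0 := by
  classical
  rw [degG_eq_card_filter, card_eq_zero, filter_eq_empty_iff]
  rintro S - ⟨hKS, -, hS⟩
  exact hI (hS.subset (coe_subset.mpr (hIK.trans hKS)))

theorem pairsPresent_iff_isClique {T I J : Finset (Fin n)} (hI : G.IsClique (I : Set (Fin n)))
    (hJ : G.IsClique (J : Set (Fin n))) :
    pairsPresent G T I J ↔ G.IsClique (T : Set (Fin n)) := by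
  refine ⟨fun hT u hu v hv huv => ?_, fun hT u v hu hv huv _ _ => hT hu hv huv⟩
  by_cases huvI : u ∈ I ∧ v ∈ I
  · exact hI huvI.1 huvI.2 huv
  by_cases huvJ : u ∈ J ∧ v ∈ J
  · exact hJ huvJ.1 huvJ.2 huv
  exact hT u v hu hv huv huvI huvJ

theorem Mprime_apply_of_isClique {I J : rSet n r} (hI : G.IsClique (I.1 : Set (Fin n)))
    (hJ : G.IsClique (J.1 : Set (Fin n))) :
    Mprime G r k I J = degG G r (I.1 ∪ J.1) * betaCoeff r k (I.1 ∩ J.1).card := by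
  classical
  have hfilter : ((univ.filter fun T : Finset (Fin n) => T.card = 2 * r).filter
      fun T => I.1 ∪ J.1 ⊆ T ∧ pairsPresent G T I.1 J.1) =
      univ.filter fun S : Finset (Fin n) =>
        I.1 ∪ J.1 ⊆ S ∧ S.card = 2 * r ∧ G.IsClique (S : Set (Fin n)) := by
    ext T
    simp only [mem_filter, mem_univ, true_and, pairsPresent_iff_isClique G hI hJ]
    tauto
  rw [Mprime, Matrix.sum_apply]
  simp only [MTmat]
  rw [← sum_filter, hfilter, sum_const, nsmul_eq_mul, degG_eq_card_filter]

theorem MG_apply_of_isClique {I J : rSet n r} (hI : G.IsClique (I.1 : Set (Fin n)))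
    (hJ : G.IsClique (J.1 : Set (Fin n))) : MG G r k I J = Mprime G r k I J := by
  rw [Mprime_apply_of_isClique G r k hI hJ, betaCoeff_card_inter k I.2 J.2, MG, mul_div_assoc]

open scoped Classical in
noncomputable def cliqueIndicator (I : rSet n r) : ℝ :=
  if G.IsClique (I.1 : Set (Fin n)) then 1 else 0

theorem MG_eq_diagonal_mul_Mprime_mul_diagonal :
    MG G r k = Matrix.diagonal (cliqueIndicator G r) * Mprime G r k *
      Matrix.diagonal (cliqueIndicator G r) := by
  ext I J
  rw [Matrix.mul_diagonal, Matrix.diagonal_mul, cliqueIndicator, cliqueIndicator]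
  by_cases hI : G.IsClique (I.1 : Set (Fin n))
  · by_cases hJ : G.IsClique (J.1 : Set (Fin n))
    · simp only [if_pos hI, if_pos hJ, one_mul, mul_one, MG_apply_of_isClique G r k hI hJ]
    · simp [if_neg hJ, MG, degG_eq_zero_of_not_isClique G r subset_union_right hJ]
  · simp [if_neg hI, MG, degG_eq_zero_of_not_isClique G r subset_union_left hI]

theorem MG_posSemidef_of_Mprime_posSemidef_general {n : ℕ} (G : SimpleGraph (Fin n)) (r k : ℕ)
    (h : (Mprime G r k).PosSemidef) : (MG G r k).PosSemidef := by
  rw [MG_eq_diagonal_mul_Mprime_mul_diagonal]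
  exact h.diagonal_mul_mul_diagonal _

/-- For a graph `G` on `[n]` and positive integers `r, k` with `2r ≤ n`,
if `M'` is positive semidefinite then `M_G` is positive semidefinite. -/
theorem MG_posSemidef_of_Mprime_posSemidef {n : ℕ} (G : SimpleGraph (Fin n)) (r k : ℕ)
    (hr : 1 ≤ r) (hk : 1 ≤ k) (hrn : 2 * r ≤ n)
    (h : (Mprime G r k).PosSemidef) : (MG G r k).PosSemidef :=
  MG_posSemidef_of_Mprime_posSemidef_general G r k h
end

section
/- Let n, r, k be positive integers with 2r ≤ n and r < min(k, n−k). Then the real matrix E with rows and columns indexed by the subsets I, J ⊆ [n] of size at most r, defined by E(I,J) = C(n−|I∪J|, 2r−|I∪J|) · (C(k,|I∪J|)/C(2r,|I∪J|)) · 2^{−C(2r,2)}, is positive semidefinite. -/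
/-!
`E(I,J)` depends only on `m = |I ∪ J| ≤ 2r`. For `m ≤ k ≤ n`, trinomial revision
`C(n,m) C(n-m,l-m) = C(n,l) C(l,m)` (with `l = 2r` and `l = k`) rewrites it as the constant
`C(n,2r) / C(n,k) · 2^{-C(2r,2)}` times `C(n-m, k-m)`, the number of `k`-subsets of `[n]`
containing `I ∪ J`; for `m > k` both sides vanish. So `E` is a nonnegative multiple of the
Gram matrix `Wᵀ W` of the inclusion matrix `W` of `k`-subsets against subsets.
-/

open Finset Matrix

/-- The expectation matrix `E`, indexed by the subsets of `[n]` of size at most `r`: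
`E(I,J) = C(n−|I∪J|, 2r−|I∪J|) · (C(k,|I∪J|)/C(2r,|I∪J|)) · 2^{−C(2r,2)}`. -/
noncomputable def Emat (n r k : ℕ) :
    Matrix {S : Finset (Fin n) // S.card ≤ r} {S : Finset (Fin n) // S.card ≤ r} ℝ :=
  fun I J =>
    (Nat.choose (n - (I.1 ∪ J.1).card) (2 * r - (I.1 ∪ J.1).card) : ℝ)
      * ((Nat.choose k (I.1 ∪ J.1).card : ℝ) / (Nat.choose (2 * r) (I.1 ∪ J.1).card : ℝ))
      * ((2 : ℝ) ^ (Nat.choose (2 * r) 2))⁻¹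

def inclusionMatrix (α R : Type*) [Fintype α] [DecidableEq α] [Zero R] [One R] (k : ℕ) :
    Matrix (univ.powersetCard k : Finset (Finset α)) (Finset α) R :=
  fun T S => if S ⊆ T.1 then 1 else 0

theorem inclusionMatrix_transpose_mul_apply {α R : Type*} [Fintype α] [DecidableEq α]
    [NonAssocSemiring R] (k : ℕ) (S S' : Finset α) :
    ((inclusionMatrix α R k)ᵀ * inclusionMatrix α R k) S S'
      = #{T ∈ univ.powersetCard k | S ∪ S' ⊆ T} := by
  calc _ = ∑ T : univ.powersetCard k, if S ∪ S' ⊆ T.1 then (1 : R) else 0 :=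
        sum_congr rfl fun T _ => by
          simp only [transpose_apply, inclusionMatrix, ite_zero_mul_ite_zero, mul_one,
            union_subset_iff]
    _ = _ := by
        rw [sum_coe_sort (univ.powersetCard k) (fun T => if S ∪ S' ⊆ T then (1 : R) else 0),
          sum_boole]

theorem choose_sub_mul_choose_mul_choose {n k l m : ℕ} (hml : m ≤ l) (hmk : m ≤ k)
    (hmn : m ≤ n) :
    (n - m).choose (l - m) * k.choose m * n.choose k
      = n.choose l * (n - m).choose (k - m) * l.choose m := by
  apply Nat.eq_of_mul_eq_mul_left (Nat.choose_pos hmn)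
  calc n.choose m * ((n - m).choose (l - m) * k.choose m * n.choose k)
      = (n.choose m * (n - m).choose (l - m)) * (n.choose k * k.choose m) := by ring
    _ = (n.choose l * l.choose m) * (n.choose m * (n - m).choose (k - m)) := by
        rw [Nat.choose_mul hml, Nat.choose_mul hmk]
    _ = n.choose m * (n.choose l * (n - m).choose (k - m) * l.choose m) := by ring

theorem Emat_apply_eq_mul_inclusionMatrix {n r k : ℕ} (hkn : k ≤ n)
    (I J : {S : Finset (Fin n) // S.card ≤ r}) :
    Emat n r k I J
      = (n.choose (2 * r) / n.choose k * ((2 : ℝ) ^ (2 * r).choose 2)⁻¹)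
        * ((inclusionMatrix (Fin n) ℝ k)ᵀ * inclusionMatrix (Fin n) ℝ k) I.1 J.1 := by
  rw [inclusionMatrix_transpose_mul_apply, Emat]
  set U := I.1 ∪ J.1
  have hU : #U ≤ 2 * r := (card_union_le _ _).trans (two_mul r ▸ add_le_add I.2 J.2)
  rcases le_or_gt #U k with hUk | hUk
  · rw [card_filter_powersetCard_subset U univ k (subset_univ U) hUk, card_univ,
      Fintype.card_fin]
    have hid : ((n - #U).choose (2 * r - #U) * k.choose #U * n.choose k : ℝ)
        = n.choose (2 * r) * (n - #U).choose (k - #U) * (2 * r).choose #U := by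
      exact_mod_cast choose_sub_mul_choose_mul_choose hU hUk (hUk.trans hkn)
    have hnk : (n.choose k : ℝ) ≠ 0 := by exact_mod_cast (Nat.choose_pos hkn).ne'
    have h2r : ((2 * r).choose #U : ℝ) ≠ 0 := by exact_mod_cast (Nat.choose_pos hU).ne'
    field_simp
    linear_combination hid
  · have hempty : {T ∈ (univ : Finset (Fin n)).powersetCard k | U ⊆ T} = ∅ :=
      filter_eq_empty_iff.mpr fun T hT hUT =>
        (card_le_card hUT).not_gt ((mem_powersetCard.mp hT).2 ▸ hUk)
    simp [hempty, Nat.choose_eq_zero_of_lt hUk]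

theorem Emat_posSemidef_general (n r k : ℕ) (hrnk : r < n - k) :
    (Emat n r k).PosSemidef := by
  have hkn : k ≤ n := by omega
  have hE : Emat n r k = (n.choose (2 * r) / n.choose k * ((2 : ℝ) ^ (2 * r).choose 2)⁻¹)
      • ((inclusionMatrix (Fin n) ℝ k)ᵀ * inclusionMatrix (Fin n) ℝ k).submatrix
        Subtype.val Subtype.val := by
    ext I J
    rw [Matrix.smul_apply, submatrix_apply, smul_eq_mul,
      Emat_apply_eq_mul_inclusionMatrix hkn]
  rw [hE, ← conjTranspose_eq_transpose_of_trivial]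
  exact ((posSemidef_conjTranspose_mul_self _).submatrix _).smul (by positivity)

/-- For positive integers `n, r, k` with `2r ≤ n` and
`r < min(k, n−k)`, the matrix `E` is positive semidefinite. -/
theorem Emat_posSemidef (n r k : ℕ) (hn : 1 ≤ n) (hr : 1 ≤ r) (hk : 1 ≤ k)
    (hrn : 2 * r ≤ n) (hrk : r < k) (hrnk : r < n - k) :
    (Emat n r k).PosSemidef :=
  Emat_posSemidef_general n r k hrnk
end

section
/- Let n, r, k be positive integers with 2r ≤ n and r ≤ k, and let E be the real matrix with rows and columns indexed by the subsets I, J ⊆ [n] of size at most r, defined by E(I,J) = C(n−|I∪J|, 2r−|I∪J|) · (C(k,|I∪J|)/C(2r,|I∪J|)) · 2^{−C(2r,2)}. Then the kernel of E has dimension at least Σ_{i=0}^{r−1} C(n,i). -/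
open Finset

/-!
`E(I,J) = f(|I ∪ J|)`, where for `m ≤ 2r` the value `f(m)` is a constant multiple of
`C(k,m) / C(n,m)`; hence `(n - m) f(m+1) = (k - m) f(m)`. With this recursion, counting the pairs
`(x, T)` with `x ∉ I` and `insert x I ⊆ T` shows, by induction on `r - |I|`, that the row of `I` is
`C(k-|I|, r-|I|)⁻¹` times the sum of the rows of the `r`-sets `T ⊇ I`. So `E` factors through its
`C(n,r)` rows indexed by `r`-sets, and rank–nullity gives the bound.
-/

theorem Nat.cast_choose_succ_right_eq {R : Type*} [CommRing R] (k m : ℕ) :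
    (k.choose (m + 1) : R) * (m + 1) = k.choose m * ((k : R) - m) := by
  rcases le_or_gt m k with hmk | hkm
  · rw [← Nat.cast_sub hmk]
    exact_mod_cast congrArg (Nat.cast (R := R)) (Nat.choose_succ_right_eq k m)
  · simp [Nat.choose_eq_zero_of_lt hkm, Nat.choose_eq_zero_of_lt (hkm.trans m.lt_succ_self)]

theorem Nat.sub_mul_cast_choose_div_choose_succ {K : Type*} [Field K] [CharZero K]
    {n m : ℕ} (k : ℕ) (hmn : m < n) :
    ((n : K) - m) * (k.choose (m + 1) / n.choose (m + 1))
      = ((k : K) - m) * (k.choose m / n.choose m) := by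
  have hk := Nat.cast_choose_succ_right_eq (R := K) k m
  have hn := Nat.cast_choose_succ_right_eq (R := K) n m
  have hn₀ : (n.choose m : K) ≠ 0 := by exact_mod_cast (Nat.choose_pos hmn.le).ne'
  have hn₁ : (n.choose (m + 1) : K) ≠ 0 := by exact_mod_cast (Nat.choose_pos hmn).ne'
  have hm₁ : (m + 1 : K) ≠ 0 := by exact_mod_cast m.succ_ne_zero
  field_simp
  refine mul_right_cancel₀ hm₁ ?_
  linear_combination ((n : K) - m) * n.choose m * hk - ((k : K) - m) * k.choose m * hn

namespace Finset

variable {α β : Type*} [Fintype α] [DecidableEq α] [AddCommMonoid β]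

theorem sum_compl_sum_filter_insert_subset (P : Finset (Finset α)) (I : Finset α)
    (g : Finset α → β) :
    ∑ x ∈ Iᶜ, ∑ T ∈ P with insert x I ⊆ T, g T = ∑ T ∈ P with I ⊆ T, #(T \ I) • g T := by
  simp_rw [← sum_const]
  refine sum_comm' fun x T => ?_
  simp only [mem_compl, mem_filter, mem_sdiff, insert_subset_iff]
  tauto

theorem sum_compl_card_insert {I U : Finset α} (hIU : I ⊆ U) (F : ℕ → β) :
    ∑ x ∈ Iᶜ, F #(insert x U) = (#U - #I) • F #U + (Fintype.card α - #U) • F (#U + 1) := by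
  have hsplit : Iᶜ = (U \ I) ∪ Uᶜ := by
    ext x; simp only [mem_compl, mem_union, mem_sdiff]; have := @hIU x; tauto
  have hdisj : Disjoint (U \ I) Uᶜ := (disjoint_compl_right (a := U)).mono_left sdiff_subset
  have hin : ∀ x ∈ U \ I, F #(insert x U) = F #U := fun x hx => by
    rw [insert_eq_self.2 (mem_sdiff.1 hx).1]
  have hout : ∀ x ∈ Uᶜ, F #(insert x U) = F (#U + 1) := fun x hx => by
    rw [card_insert_of_notMem (mem_compl.1 hx)]
  rw [hsplit, sum_union hdisj, sum_congr rfl hin, sum_congr rfl hout, sum_const, sum_const,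
    card_sdiff_of_subset hIU, card_compl]

end Finset

namespace Emat

variable {n r k : ℕ}

noncomputable def coeff (n r k m : ℕ) : ℝ :=
  (Nat.choose (n - m) (2 * r - m) : ℝ) * ((Nat.choose k m : ℝ) / (Nat.choose (2 * r) m : ℝ))
    * ((2 : ℝ) ^ (Nat.choose (2 * r) 2))⁻¹

theorem apply_eq_coeff (I J : {S : Finset (Fin n) // S.card ≤ r}) :
    Emat n r k I J = coeff n r k (I.1 ∪ J.1).card := rfl

theorem coeff_eq (hrn : 2 * r ≤ n) {m : ℕ} (hm : m ≤ 2 * r) :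
    coeff n r k m = n.choose (2 * r) * ((2 : ℝ) ^ (2 * r).choose 2)⁻¹
      * (k.choose m / n.choose m) := by
  have key : (n.choose (2 * r) * (2 * r).choose m : ℝ)
      = n.choose m * (n - m).choose (2 * r - m) := by exact_mod_cast Nat.choose_mul (n := n) hm
  have h₁ : ((2 * r).choose m : ℝ) ≠ 0 := by exact_mod_cast (Nat.choose_pos hm).ne'
  have h₂ : (n.choose m : ℝ) ≠ 0 := by exact_mod_cast (Nat.choose_pos (hm.trans hrn)).ne'
  unfold coeff
  field_simp
  linear_combination (-(k.choose m : ℝ)) * key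

theorem sub_mul_coeff_succ (hrn : 2 * r ≤ n) {m : ℕ} (hm : m < 2 * r) :
    ((n : ℝ) - m) * coeff n r k (m + 1) = ((k : ℝ) - m) * coeff n r k m := by
  rw [coeff_eq hrn hm, coeff_eq hrn hm.le, mul_left_comm,
    Nat.sub_mul_cast_choose_div_choose_succ k (hm.trans_le hrn), mul_left_comm]

theorem sum_coeff_card_union_superset (hrn : 2 * r ≤ n) (hrk : r ≤ k) {J : Finset (Fin n)}
    (hJ : #J ≤ r) (d : ℕ) (I : Finset (Fin n)) (hId : #I + d = r) :
    ∑ T ∈ univ.powersetCard r with I ⊆ T, coeff n r k #(T ∪ J)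
      = (k - #I).choose d * coeff n r k #(I ∪ J) := by
  induction d generalizing I with
  | zero =>
    have hI : {T ∈ (univ : Finset (Fin n)).powersetCard r | I ⊆ T} = {I} := by
      ext T
      simp only [mem_filter, mem_powersetCard_univ, mem_singleton]
      exact ⟨fun ⟨hT, hIT⟩ => (eq_of_subset_of_card_le hIT (by omega)).symm,
        by rintro rfl; exact ⟨by omega, subset_rfl⟩⟩
    simp [hI]
  | succ d ih =>
    have him : #I ≤ #(I ∪ J) := card_le_card subset_union_left
    have hm : #(I ∪ J) < 2 * r := (card_union_le I J).trans_lt (by omega)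
    have hcount := sum_compl_sum_filter_insert_subset (univ.powersetCard r) I
      fun T => coeff n r k #(T ∪ J)
    have hinsert : ∀ x ∈ Iᶜ, ∑ T ∈ univ.powersetCard r with insert x I ⊆ T, coeff n r k #(T ∪ J)
        = (k - (#I + 1)).choose d * coeff n r k #(insert x (I ∪ J)) := fun x hx => by
      rw [ih _ (by rw [card_insert_of_notMem (mem_compl.1 hx)]; omega),
        card_insert_of_notMem (mem_compl.1 hx), insert_union]
    have hsdiff : ∀ T ∈ {T ∈ (univ : Finset (Fin n)).powersetCard r | I ⊆ T},
        #(T \ I) • coeff n r k #(T ∪ J) = (d + 1) • coeff n r k #(T ∪ J) := fun T hT => by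
      rw [mem_filter, mem_powersetCard_univ] at hT
      rw [card_sdiff_of_subset hT.2]
      congr 1
      omega
    rw [sum_congr rfl hinsert, ← mul_sum, sum_compl_card_insert subset_union_left,
      Fintype.card_fin, sum_congr rfl hsdiff, ← smul_sum] at hcount
    have hchoose : ((k - #I : ℕ) : ℝ) * (k - (#I + 1)).choose d
        = (k - #I).choose (d + 1) * (d + 1) := by
      rw [show k - #I = k - (#I + 1) + 1 by omega]
      exact_mod_cast Nat.add_one_mul_choose_eq _ _
    have hstep := sub_mul_coeff_succ (k := k) hrn hm
    simp only [nsmul_eq_mul, Nat.cast_sub him, Nat.cast_sub (hm.le.trans hrn),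
      Nat.cast_sub (show #I ≤ k by omega), Nat.cast_add_one] at hcount hchoose
    refine mul_left_cancel₀ (show (d + 1 : ℝ) ≠ 0 by positivity) ?_
    linear_combination -hcount + (k - (#I + 1)).choose d * hstep + coeff n r k #(I ∪ J) * hchoose

noncomputable def upMatrix (n r k : ℕ) :
    Matrix {S : Finset (Fin n) // S.card ≤ r} {S : Finset (Fin n) // S.card = r} ℝ :=
  fun I T => if I.1 ⊆ T.1 then (((k - #I.1).choose (r - #I.1) : ℕ) : ℝ)⁻¹ else 0

theorem eq_upMatrix_mul_submatrix (hrn : 2 * r ≤ n) (hrk : r ≤ k) :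
    Emat n r k = upMatrix n r k *
      (Emat n r k).submatrix (fun T : {S : Finset (Fin n) // S.card = r} => ⟨T.1, T.2.le⟩) id := by
  ext I J
  have hpos : 0 < (k - #I.1).choose (r - #I.1) := Nat.choose_pos (by omega)
  simp only [Matrix.mul_apply, upMatrix, Matrix.submatrix_apply, id, apply_eq_coeff, ite_mul,
    zero_mul]
  rw [← sum_subtype (univ.powersetCard r) (fun T => mem_powersetCard_univ)
      (fun T => if I.1 ⊆ T then _ * coeff n r k #(T ∪ J.1) else 0),
    ← sum_filter, ← mul_sum, sum_coeff_card_union_superset hrn hrk J.2 (r - #I.1) I.1 (by omega),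
    inv_mul_cancel_left₀ (by exact_mod_cast hpos.ne')]

theorem rank_le_choose (hrn : 2 * r ≤ n) (hrk : r ≤ k) : (Emat n r k).rank ≤ n.choose r := by
  rw [eq_upMatrix_mul_submatrix hrn hrk]
  calc _ ≤ (upMatrix n r k).rank := Matrix.rank_mul_le_left _ _
    _ ≤ Fintype.card {S : Finset (Fin n) // S.card = r} := Matrix.rank_le_card_width _
    _ = n.choose r := by rw [Fintype.card_finset_len, Fintype.card_fin]

end Emat

theorem Fintype.card_finset_card_le (α : Type*) [Fintype α] (r : ℕ) :
    Fintype.card {s : Finset α // s.card ≤ r}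
      = ∑ i ∈ range (r + 1), (Fintype.card α).choose i := by
  classical
  rw [Fintype.card_subtype, card_eq_sum_card_fiberwise (f := Finset.card) (t := range (r + 1))
    fun s hs => mem_range.2 (Nat.lt_succ_of_le (mem_filter.1 hs).2)]
  refine Finset.sum_congr rfl fun i hi => ?_
  have hir := mem_range.1 hi
  rw [filter_filter, ← Finset.card_univ, ← card_powersetCard]
  congr 1
  ext s
  simp only [mem_filter, mem_univ, true_and, mem_powersetCard_univ]
  omega

theorem Emat_kernel_dim_general (n r k : ℕ) (hrn : 2 * r ≤ n) (hrk : r ≤ k) :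
    ∑ i ∈ Finset.range r, Nat.choose n i
      ≤ Module.finrank ℝ (LinearMap.ker (Matrix.mulVecLin (Emat n r k))) := by
  have hrank : Module.finrank ℝ (LinearMap.range (Matrix.mulVecLin (Emat n r k))) ≤ n.choose r :=
    Emat.rank_le_choose hrn hrk
  have hnullity := LinearMap.finrank_range_add_finrank_ker (Matrix.mulVecLin (Emat n r k))
  rw [Module.finrank_fintype_fun_eq_card, Fintype.card_finset_card_le, Fintype.card_fin,
    sum_range_succ] at hnullity
  omega

/-- For positive integers `n, r, k` with `2r ≤ n` and `r ≤ k`, the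
kernel of `E` (as a linear map on the corresponding real coordinate space) has dimension
at least `Σ_{i=0}^{r−1} C(n,i)`. -/
theorem Emat_kernel_dim (n r k : ℕ) (hn : 1 ≤ n) (hr : 1 ≤ r) (hk : 1 ≤ k)
    (hrn : 2 * r ≤ n) (hrk : r ≤ k) :
    ∑ i ∈ Finset.range r, Nat.choose n i
      ≤ Module.finrank ℝ (LinearMap.ker (Matrix.mulVecLin (Emat n r k))) :=
  Emat_kernel_dim_general n r k hrn hrk
end

section
/- Let n, r₁, r₂, i be integers with 0 ≤ i ≤ min(r₁, r₂) and r₁, r₂ ≤ n. Let R be a real matrix with rows indexed by the (r₁−i)-element subsets of [n] and columns indexed by the (r₂−i)-element subsets of [n], such that R(V,W) = 0 whenever V ∩ W ≠ ∅. Define the real matrix R^{(i)}, with rows indexed by the r₁-element subsets and columns indexed by the r₂-element subsets of [n], by R^{(i)}(I,J) = R(I ∖ (I∩J), J ∖ (I∩J)) if |I∩J| = i, and R^{(i)}(I,J) = 0 otherwise. Then ‖R^{(i)}‖ ≤ C(r₁,i)·C(r₂,i)·‖R‖. -/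
open Finset

/-- The spectral (ℓ² operator) norm of a real matrix. -/
noncomputable def matSpectralNorm {m l : Type*} [Fintype m] [Fintype l] [DecidableEq l]
    (M : Matrix m l ℝ) : ℝ :=
  ‖LinearMap.toContinuousLinearMap (Matrix.toEuclideanLin M)‖

open scoped Classical in
/-- Given a matrix `R` with rows indexed by the `(r₁−i)`-element subsets of `[n]` and
columns indexed by the `(r₂−i)`-element subsets of `[n]`, the matrix `R^{(i)}`, with rows
indexed by the `r₁`-element and columns by the `r₂`-element subsets of `[n]`, is defined
by `R^{(i)}(I,J) = R(I ∖ (I∩J), J ∖ (I∩J))` if `|I∩J| = i`, and `0` otherwise. -/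
noncomputable def extendMat (n r₁ r₂ i : ℕ)
    (R : Matrix {V : Finset (Fin n) // V.card = r₁ - i}
        {W : Finset (Fin n) // W.card = r₂ - i} ℝ) :
    Matrix {I : Finset (Fin n) // I.card = r₁} {J : Finset (Fin n) // J.card = r₂} ℝ :=
  fun I J =>
    if h : (I.1 ∩ J.1).card = i then
      R ⟨I.1 \ (I.1 ∩ J.1), by
          have h1 : (I.1 ∩ J.1) ⊆ I.1 := Finset.inter_subset_left
          have := Finset.card_sdiff_of_subset h1
          have := I.2
          omega⟩
        ⟨J.1 \ (I.1 ∩ J.1), by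
          have h1 : (I.1 ∩ J.1) ⊆ J.1 := Finset.inter_subset_right
          have := Finset.card_sdiff_of_subset h1
          have := J.2
          omega⟩
    else 0

open Matrix
open scoped Matrix.Norms.L2Operator

/-! Write `G k` (`disjUnionMat`) for the 0/1 matrix with rows indexed by pairs `(V, S)`,
`|V| = k - i`, `|S| = i`, and columns by `k`-sets `I`, whose entry is `1` exactly when
`I = V ⊔ S`. Then `R^{(i)} = (G r₁)ᵀ (R ⊗ 1) (G r₂)`, where `R ⊗ 1` applies `R` separately for
each `S`: the entry at `(I, J)` is `∑_{S ⊆ I ∩ J} R(I ∖ S, J ∖ S)`, and since `R` vanishes on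
intersecting pairs only `S = I ∩ J` survives. A block-diagonal matrix has norm at most that of
its blocks, and each row of `G k` has at most one `1` while each column has `C(k, i)`, so the
Schur test gives `‖G k‖ ≤ √C(k, i) ≤ C(k, i)`. -/

theorem matSpectralNorm_eq_l2_opNorm {m l : Type*} [Fintype m] [Fintype l] [DecidableEq l]
    (M : Matrix m l ℝ) : matSpectralNorm M = ‖M‖ := rfl

namespace Matrix

theorem blockDiagonal_mulVec_apply {α m l o : Type*} [NonUnitalNonAssocSemiring α] [Fintype l]
    [Fintype o] [DecidableEq o] (M : o → Matrix m l α) (x : l × o → α) (i : m) (k : o) :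
    (blockDiagonal M *ᵥ x) (i, k) = (M k *ᵥ fun j => x (j, k)) i := by
  simp only [mulVec, dotProduct, Fintype.sum_prod_type, blockDiagonal_apply', ite_mul, zero_mul]
  rw [sum_comm]
  simp

variable {𝕜 m l : Type*} [RCLike 𝕜] [Fintype m] [Fintype l] [DecidableEq l]

theorem sum_norm_mulVec_sq_le_l2_opNorm_sq (M : Matrix m l 𝕜) (x : l → 𝕜) :
    ∑ i, ‖(M *ᵥ x) i‖ ^ 2 ≤ ‖M‖ ^ 2 * ∑ j, ‖x j‖ ^ 2 := by
  have h := pow_le_pow_left₀ (norm_nonneg _) (l2_opNorm_mulVec M (WithLp.toLp 2 x)) 2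
  rw [mul_pow, EuclideanSpace.norm_sq_eq, EuclideanSpace.norm_sq_eq] at h
  simpa using h

theorem l2_opNorm_le_of_sum_norm_mulVec_sq_le (M : Matrix m l 𝕜) {c : ℝ} (hc : 0 ≤ c)
    (h : ∀ x : l → 𝕜, ∑ i, ‖(M *ᵥ x) i‖ ^ 2 ≤ c ^ 2 * ∑ j, ‖x j‖ ^ 2) : ‖M‖ ≤ c := by
  refine ContinuousLinearMap.opNorm_le_bound _ hc fun x => ?_
  rw [← pow_le_pow_iff_left₀ (norm_nonneg _) (by positivity) two_ne_zero, mul_pow,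
    EuclideanSpace.norm_sq_eq, EuclideanSpace.norm_sq_eq]
  simpa [toLpLin_apply] using h x

theorem l2_opNorm_le_sqrt_of_sum_norm_le (M : Matrix m l 𝕜) {α β : ℝ}
    (hrow : ∀ i, ∑ j, ‖M i j‖ ≤ α) (hcol : ∀ j, ∑ i, ‖M i j‖ ≤ β) : ‖M‖ ≤ √(α * β) := by
  refine l2_opNorm_le_of_sum_norm_mulVec_sq_le M (Real.sqrt_nonneg _) fun x => ?_
  rcases isEmpty_or_nonempty m with _ | ⟨⟨i₀⟩⟩
  · simp only [univ_eq_empty, sum_empty]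
    positivity
  have hα : 0 ≤ α := (sum_nonneg fun j _ => norm_nonneg (M i₀ j)).trans (hrow i₀)
  have hrow_sq (i : m) : ‖(M *ᵥ x) i‖ ^ 2 ≤ α * ∑ j, ‖M i j‖ * ‖x j‖ ^ 2 :=
    calc ‖(M *ᵥ x) i‖ ^ 2 ≤ (∑ j, ‖M i j‖ * ‖x j‖) ^ 2 := by
          gcongr
          simpa only [mulVec, dotProduct, norm_mul] using norm_sum_le univ fun j => M i j * x j
      _ ≤ (∑ j, ‖M i j‖) * ∑ j, ‖M i j‖ * ‖x j‖ ^ 2 :=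
          sum_sq_le_sum_mul_sum_of_sq_le_mul _ (fun _ _ => norm_nonneg _)
            (fun _ _ => by positivity) fun _ _ => le_of_eq (by ring)
      _ ≤ α * ∑ j, ‖M i j‖ * ‖x j‖ ^ 2 := by gcongr; exact hrow i
  calc ∑ i, ‖(M *ᵥ x) i‖ ^ 2 ≤ ∑ i, α * ∑ j, ‖M i j‖ * ‖x j‖ ^ 2 :=
        sum_le_sum fun i _ => hrow_sq i
    _ = α * ∑ j, (∑ i, ‖M i j‖) * ‖x j‖ ^ 2 := by
        rw [← mul_sum, sum_comm]
        simp_rw [sum_mul]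
    _ ≤ α * ∑ j, β * ‖x j‖ ^ 2 := by gcongr with j; exact hcol j
    _ ≤ √(α * β) ^ 2 * ∑ j, ‖x j‖ ^ 2 := by
        rw [← mul_sum, ← mul_assoc]
        gcongr
        exact (Real.sqrt_le_left (Real.sqrt_nonneg _)).1 le_rfl

theorem l2_opNorm_blockDiagonal_le {o : Type*} [Fintype o] [DecidableEq o]
    (M : o → Matrix m l 𝕜) {c : ℝ} (hc : 0 ≤ c) (hM : ∀ k, ‖M k‖ ≤ c) :
    ‖blockDiagonal M‖ ≤ c := by
  refine l2_opNorm_le_of_sum_norm_mulVec_sq_le _ hc fun x => ?_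
  simp only [Fintype.sum_prod_type_right, blockDiagonal_mulVec_apply]
  rw [mul_sum]
  gcongr with k
  calc ∑ i, ‖(M k *ᵥ fun j => x (j, k)) i‖ ^ 2 ≤ ‖M k‖ ^ 2 * ∑ j, ‖x (j, k)‖ ^ 2 :=
        sum_norm_mulVec_sq_le_l2_opNorm_sq _ _
    _ ≤ c ^ 2 * ∑ j, ‖x (j, k)‖ ^ 2 := by gcongr; exact hM k

end Matrix

theorem Finset.disjoint_and_union_eq_iff {α : Type*} [DecidableEq α] {V S I : Finset α} :
    Disjoint V S ∧ V ∪ S = I ↔ S ⊆ I ∧ V = I \ S := by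
  constructor
  · rintro ⟨hVS, rfl⟩
    exact ⟨subset_union_right, (union_sdiff_cancel_right hVS).symm⟩
  · rintro ⟨hSI, rfl⟩
    exact ⟨sdiff_disjoint, sdiff_union_of_subset hSI⟩

section DisjUnion

variable {α : Type*} [Fintype α] [DecidableEq α] {k i : ℕ}

def sdiffOfSubset (I : {I : Finset α // I.card = k}) (S : {S : Finset α // S.card = i})
    (h : S.1 ⊆ I.1) : {V : Finset α // V.card = k - i} :=
  ⟨I.1 \ S.1, by rw [card_sdiff_of_subset h, I.2, S.2]⟩

variable (α k i) in
def disjUnionMat :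
    Matrix ({V : Finset α // V.card = k - i} × {S : Finset α // S.card = i})
      {I : Finset α // I.card = k} ℝ :=
  of fun p I => if Disjoint p.1.1 p.2.1 ∧ p.1.1 ∪ p.2.1 = I.1 then 1 else 0

theorem sum_disjUnionMat_mul (f : {V : Finset α // V.card = k - i} → ℝ)
    (S : {S : Finset α // S.card = i}) (I : {I : Finset α // I.card = k}) :
    ∑ V, disjUnionMat α k i (V, S) I * f V =
      if h : S.1 ⊆ I.1 then f (sdiffOfSubset I S h) else 0 := by
  simp only [disjUnionMat, of_apply, disjoint_and_union_eq_iff, ite_mul, one_mul, zero_mul]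
  split_ifs with h
  · have hV (V : {V : Finset α // V.card = k - i}) :
        V.1 = I.1 \ S.1 ↔ V = sdiffOfSubset I S h :=
      (Subtype.ext_iff (a2 := sdiffOfSubset I S h)).symm
    simp [h, hV]
  · simp [h]

theorem sum_norm_disjUnionMat_row_le_one
    (p : {V : Finset α // V.card = k - i} × {S : Finset α // S.card = i}) :
    ∑ I, ‖disjUnionMat α k i p I‖ ≤ 1 := by
  simp only [disjUnionMat, of_apply, apply_ite norm, norm_one, norm_zero]
  rw [sum_boole, Nat.cast_le_one]
  exact card_le_one.2 fun I hI J hJ => Subtype.ext <| by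
    simp only [mem_filter] at hI hJ
    rw [← hI.2.2, hJ.2.2]

theorem card_filter_subset_eq_choose (I : Finset α) :
    #{S : {S : Finset α // S.card = i} | S.1 ⊆ I} = I.card.choose i := by
  rw [← card_powersetCard, ← card_map (Function.Embedding.subtype _)]
  congr 1
  ext S
  simp [mem_powersetCard, and_comm]

theorem sum_norm_disjUnionMat_col_eq (I : {I : Finset α // I.card = k}) :
    ∑ p, ‖disjUnionMat α k i p I‖ = k.choose i := by
  have h (S : {S : Finset α // S.card = i}) := sum_disjUnionMat_mul (fun _ => 1) S I
  simp only [mul_one] at h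
  rw [Fintype.sum_prod_type_right]
  simp only [disjUnionMat, of_apply, apply_ite norm, norm_one, norm_zero] at h ⊢
  simp only [h, dite_eq_ite, sum_boole, card_filter_subset_eq_choose, I.2]

theorem l2_opNorm_disjUnionMat_le :
    ‖disjUnionMat α k i‖ ≤ √(k.choose i) := by
  simpa using l2_opNorm_le_sqrt_of_sum_norm_le _ sum_norm_disjUnionMat_row_le_one
    (fun I => (sum_norm_disjUnionMat_col_eq I).le)

end DisjUnion

section ExtendMat

variable {n r₁ r₂ i : ℕ}
  {R : Matrix {V : Finset (Fin n) // V.card = r₁ - i} {W : Finset (Fin n) // W.card = r₂ - i} ℝ}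

theorem apply_sdiffOfSubset_eq_zero (hR : ∀ V W, V.1 ∩ W.1 ≠ ∅ → R V W = 0)
    {I : {I : Finset (Fin n) // I.card = r₁}} {J : {J : Finset (Fin n) // J.card = r₂}}
    {S : {S : Finset (Fin n) // S.card = i}} (hI : S.1 ⊆ I.1) (hJ : S.1 ⊆ J.1)
    (hS : S.1 ≠ I.1 ∩ J.1) :
    R (sdiffOfSubset I S hI) (sdiffOfSubset J S hJ) = 0 := by
  refine hR _ _ (nonempty_iff_ne_empty.1 ?_)
  change ((I.1 \ S.1) ⊓ (J.1 \ S.1)).Nonempty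
  rw [← inf_sdiff, sdiff_nonempty]
  exact fun h => hS (subset_antisymm (subset_inter hI hJ) h)

theorem extendMat_apply_eq_sum (hR : ∀ V W, V.1 ∩ W.1 ≠ ∅ → R V W = 0)
    (I : {I : Finset (Fin n) // I.card = r₁}) (J : {J : Finset (Fin n) // J.card = r₂}) :
    extendMat n r₁ r₂ i R I J = ∑ S : {S : Finset (Fin n) // S.card = i},
      if hI : S.1 ⊆ I.1 then
        if hJ : S.1 ⊆ J.1 then R (sdiffOfSubset I S hI) (sdiffOfSubset J S hJ) else 0
      else 0 := by
  have hterm (S : {S : Finset (Fin n) // S.card = i}) (hS : S.1 ≠ I.1 ∩ J.1) :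
      (if hI : S.1 ⊆ I.1 then
        if hJ : S.1 ⊆ J.1 then R (sdiffOfSubset I S hI) (sdiffOfSubset J S hJ) else 0
      else 0) = 0 := by
    split_ifs with hI hJ
    exacts [apply_sdiffOfSubset_eq_zero hR hI hJ hS, rfl, rfl]
  by_cases hc : (I.1 ∩ J.1).card = i
  · rw [sum_eq_single_of_mem ⟨I.1 ∩ J.1, hc⟩ (mem_univ _)
      fun S _ hS => hterm S fun h => hS (Subtype.ext h)]
    simp only [extendMat, dif_pos hc, dif_pos inter_subset_left, dif_pos inter_subset_right]
    rfl
  · simp only [extendMat, dif_neg hc]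
    exact (sum_eq_zero fun S _ => hterm S fun h => hc (h ▸ S.2)).symm

theorem extendMat_eq_transpose_mul_blockDiagonal_mul (hR : ∀ V W, V.1 ∩ W.1 ≠ ∅ → R V W = 0) :
    extendMat n r₁ r₂ i R = (disjUnionMat (Fin n) r₁ i)ᵀ *
      (blockDiagonal (fun _ : {S : Finset (Fin n) // S.card = i} => R) *
        disjUnionMat (Fin n) r₂ i) := by
  ext I J
  have hDG (V : {V : Finset (Fin n) // V.card = r₁ - i})
      (S : {S : Finset (Fin n) // S.card = i}) :
      (blockDiagonal (fun _ : {S : Finset (Fin n) // S.card = i} => R) *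
        disjUnionMat (Fin n) r₂ i) (V, S) J =
        if hJ : S.1 ⊆ J.1 then R V (sdiffOfSubset J S hJ) else 0 := by
    rw [mul_apply, Fintype.sum_prod_type_right, sum_eq_single_of_mem S (mem_univ _)]
    · simp_rw [blockDiagonal_apply_eq, mul_comm (R V _)]
      exact sum_disjUnionMat_mul _ S J
    · intro S' _ hS'
      simp [blockDiagonal_apply_ne _ _ _ (Ne.symm hS')]
  rw [extendMat_apply_eq_sum hR, mul_apply, Fintype.sum_prod_type_right]
  simp only [transpose_apply, hDG]
  exact sum_congr rfl fun S _ => (sum_disjUnionMat_mul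
    (fun V => if hJ : S.1 ⊆ J.1 then R V (sdiffOfSubset J S hJ) else 0) S I).symm

end ExtendMat

theorem Real.sqrt_natCast_le_self (c : ℕ) : √(c : ℝ) ≤ c :=
  Real.sqrt_le_self_iff.2 <| (Nat.eq_zero_or_pos c).imp (by simp [·]) (by exact_mod_cast ·)

theorem extendMat_norm_bound_general (n r₁ r₂ i : ℕ)
    (R : Matrix {V : Finset (Fin n) // V.card = r₁ - i}
        {W : Finset (Fin n) // W.card = r₂ - i} ℝ)
    (hR : ∀ V W, V.1 ∩ W.1 ≠ ∅ → R V W = 0) :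
    matSpectralNorm (extendMat n r₁ r₂ i R)
      ≤ (Nat.choose r₁ i : ℝ) * (Nat.choose r₂ i : ℝ) * matSpectralNorm R := by
  set G₁ := disjUnionMat (Fin n) r₁ i
  set G₂ := disjUnionMat (Fin n) r₂ i
  set D := blockDiagonal fun _ : {S : Finset (Fin n) // S.card = i} => R
  have hG₁ : ‖G₁ᵀ‖ ≤ √(r₁.choose i) := by
    rw [← conjTranspose_eq_transpose_of_trivial, l2_opNorm_conjTranspose]
    exact l2_opNorm_disjUnionMat_le
  have hG₂ : ‖G₂‖ ≤ √(r₂.choose i) := l2_opNorm_disjUnionMat_le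
  have hD : ‖D‖ ≤ ‖R‖ := l2_opNorm_blockDiagonal_le _ (norm_nonneg R) fun _ => le_rfl
  rw [matSpectralNorm_eq_l2_opNorm, matSpectralNorm_eq_l2_opNorm,
    extendMat_eq_transpose_mul_blockDiagonal_mul hR]
  calc ‖G₁ᵀ * (D * G₂)‖ ≤ ‖G₁ᵀ‖ * (‖D‖ * ‖G₂‖) :=
        (l2_opNorm_mul _ _).trans (by gcongr; exact l2_opNorm_mul _ _)
    _ ≤ √(r₁.choose i) * (‖R‖ * √(r₂.choose i)) := by gcongr
    _ ≤ r₁.choose i * (‖R‖ * r₂.choose i) := by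
        gcongr <;> exact Real.sqrt_natCast_le_self _
    _ = r₁.choose i * r₂.choose i * ‖R‖ := by ring

/-- Let `0 ≤ i ≤ min(r₁, r₂)` and `r₁, r₂ ≤ n`, and let `R` be a real
matrix indexed by the `(r₁−i)`- and `(r₂−i)`-element subsets of `[n]` with `R(V,W) = 0`
whenever `V ∩ W ≠ ∅`. Then `‖R^{(i)}‖ ≤ C(r₁,i)·C(r₂,i)·‖R‖`. -/
theorem extendMat_norm_bound (n r₁ r₂ i : ℕ) (hi₁ : i ≤ r₁) (hi₂ : i ≤ r₂)
    (h₁ : r₁ ≤ n) (h₂ : r₂ ≤ n)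
    (R : Matrix {V : Finset (Fin n) // V.card = r₁ - i}
        {W : Finset (Fin n) // W.card = r₂ - i} ℝ)
    (hR : ∀ V W, V.1 ∩ W.1 ≠ ∅ → R V W = 0) :
    matSpectralNorm (extendMat n r₁ r₂ i R)
      ≤ (Nat.choose r₁ i : ℝ) * (Nat.choose r₂ i : ℝ) * matSpectralNorm R :=
  extendMat_norm_bound_general n r₁ r₂ i R hR
end

section
/- For every ε ∈ (0,1) and every nonnegative integer x, if n > x²·(2e − e·ln ε)·(2e + 2 − e·ln ε), then for G ← G(n,1/2), the probability that |N_x(G) − 2^{−C(x,2)}·C(n,x)| > e·(2 − ln ε)·(x²/x!)·n^{x−1} is less than ε. -/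
/-!
A graph on `Fin n` is the same as a point of the Boolean cube indexed by the `C(n,2)` edge slots,
and `G(n,1/2)` is the uniform measure on that cube. Flipping one edge `uv` changes `N_x` by at
most `C(n, x-2)`, since only `x`-sets containing both `u` and `v` can change status, and the mean
of `N_x` is `2^{-C(x,2)} C(n,x)`. McDiarmid's bounded-differences inequality, proved on the cube
from Hoeffding's two-point bound `(e^{la} + e^{lb})/2 ≤ e^{l(a+b)/2 + l²c²/8}` by induction on the
number of coordinates, bounds the deviation probability by `2 exp(-2t²/(C(n,2) C(n,x-2)²))`.
At the given threshold `t` the exponent is at least `2 - ln ε`, and `2e^{-2} < 1`.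
-/

open Finset

/-- `N_x(G)`: the number of `x`-element cliques of `G`. -/
noncomputable def numCliques {n : ℕ} (G : SimpleGraph (Fin n)) (x : ℕ) : ℕ :=
  Nat.card {S : Finset (Fin n) // S.card = x ∧ G.IsClique (S : Set (Fin n))}

open Real
open scoped BigOperators Nat

section BooleanCube

lemma card_filter_lt_mul_exp_le_sum {α : Type*} [Fintype α] (g : α → ℝ) {l : ℝ} (hl : 0 ≤ l)
    (t : ℝ) : (#{z | t < g z} : ℝ) * exp (l * t) ≤ ∑ z, exp (l * g z) :=
  calc (#{z | t < g z} : ℝ) * exp (l * t)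
      ≤ ∑ z ∈ {z | t < g z}, exp (l * g z) := by
        rw [← nsmul_eq_mul]
        exact card_nsmul_le_sum _ _ _ fun z hz =>
          exp_le_exp.2 (mul_le_mul_of_nonneg_left (mem_filter.1 hz).2.le hl)
    _ ≤ ∑ z, exp (l * g z) :=
        sum_le_sum_of_subset_of_nonneg (filter_subset _ _) fun _ _ _ => (exp_pos _).le

lemma card_filter_forall_eq_true_mul_two_pow {ι : Type*} [Fintype ι] [DecidableEq ι]
    (P : Finset ι) :
    #{z : ι → Bool | ∀ i ∈ P, z i = true} * 2 ^ #P = 2 ^ Fintype.card ι := by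
  have hpi : ({z : ι → Bool | ∀ i ∈ P, z i = true} : Finset (ι → Bool))
      = Fintype.piFinset fun i => if i ∈ P then {true} else univ := by
    ext z
    simp only [mem_filter, mem_univ, true_and, Fintype.mem_piFinset]
    exact forall_congr' fun i => by split_ifs with hi <;> simp [hi]
  rw [hpi, Fintype.card_piFinset]
  simp_rw [apply_ite card, card_singleton, card_univ, Fintype.card_bool]
  rw [prod_ite, prod_const_one, prod_const, one_mul, ← pow_add, filter_not, filter_mem_eq_inter,
    univ_inter, card_sdiff_add_card_eq_card P.subset_univ, card_univ]

lemma exp_add_exp_div_two_le {a b c : ℝ} (l : ℝ) (h : |a - b| ≤ c) :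
    (exp (l * a) + exp (l * b)) / 2 ≤ exp (l * ((a + b) / 2) + l ^ 2 * c ^ 2 / 8) := by
  have hcosh : (exp (l * a) + exp (l * b)) / 2
      = exp (l * ((a + b) / 2)) * cosh (l * ((a - b) / 2)) := by
    rw [cosh_eq, mul_div_assoc', mul_add, ← exp_add, ← exp_add]
    ring_nf
  have hsq : (l * ((a - b) / 2)) ^ 2 / 2 ≤ l ^ 2 * c ^ 2 / 8 := by
    have : (a - b) ^ 2 ≤ c ^ 2 := sq_le_sq' (abs_le.1 h).1 (abs_le.1 h).2
    nlinarith [sq_nonneg l]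
  rw [hcosh, exp_add]
  gcongr
  exact (cosh_le_exp_half_sq _).trans (exp_le_exp.2 hsq)

lemma expect_fin_succ_bool {m : ℕ} (g : (Fin (m + 1) → Bool) → ℝ) :
    𝔼 z, g z = 𝔼 y, (g (Fin.cons false y) + g (Fin.cons true y)) / 2 := by
  rw [← Fintype.expect_equiv (Fin.consEquiv fun _ => Bool) (fun p => g (Fin.cons p.1 p.2)) g
    fun _ => rfl, ← univ_product_univ, expect_product, expect_comm]
  refine expect_congr rfl fun y _ => ?_
  simp [expect_eq_sum_div_card, add_comm]

variable {ι : Type*} [DecidableEq ι]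

def HasBoundedDifferences (f : (ι → Bool) → ℝ) (c : ℝ) : Prop :=
  ∀ z i b, |f z - f (Function.update z i b)| ≤ c

lemma HasBoundedDifferences.neg {f : (ι → Bool) → ℝ} {c : ℝ} (hf : HasBoundedDifferences f c) :
    HasBoundedDifferences (-f) c := fun z i b => by
  rw [Pi.neg_apply, Pi.neg_apply, neg_sub_neg, abs_sub_comm]
  exact hf z i b

lemma HasBoundedDifferences.average_cons {m : ℕ} {f : (Fin (m + 1) → Bool) → ℝ} {c : ℝ}
    (hf : HasBoundedDifferences f c) :
    HasBoundedDifferences (fun y => (f (Fin.cons false y) + f (Fin.cons true y)) / 2) c := by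
  intro y i b
  have h₀ := hf (Fin.cons false y) i.succ b
  have h₁ := hf (Fin.cons true y) i.succ b
  rw [← Fin.cons_update] at h₀ h₁
  rw [show ∀ p q r s : ℝ, (p + q) / 2 - (r + s) / 2 = ((p - r) + (q - s)) / 2 by intros; ring,
    abs_div, abs_two]
  linarith [abs_add_le (f (Fin.cons false y) - f (Fin.cons false (Function.update y i b)))
    (f (Fin.cons true y) - f (Fin.cons true (Function.update y i b)))]

lemma HasBoundedDifferences.expect_exp_mul_le_of_fin {m : ℕ} {f : (Fin m → Bool) → ℝ} {c : ℝ}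
    (hf : HasBoundedDifferences f c) (l : ℝ) :
    𝔼 z, exp (l * f z) ≤ exp (l * 𝔼 z, f z + m * (l ^ 2 * c ^ 2 / 8)) := by
  induction m with
  | zero => simp
  | succ m ih =>
    have hfirst (y : Fin m → Bool) : |f (Fin.cons false y) - f (Fin.cons true y)| ≤ c := by
      simpa [Fin.update_cons_zero] using hf (Fin.cons false y) 0 true
    calc 𝔼 z, exp (l * f z)
        = 𝔼 y, (exp (l * f (Fin.cons false y)) + exp (l * f (Fin.cons true y))) / 2 :=
          expect_fin_succ_bool _
      _ ≤ 𝔼 y, exp (l * ((f (Fin.cons false y) + f (Fin.cons true y)) / 2)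
            + l ^ 2 * c ^ 2 / 8) :=
          expect_le_expect fun y _ => exp_add_exp_div_two_le l (hfirst y)
      _ = exp (l ^ 2 * c ^ 2 / 8)
            * 𝔼 y, exp (l * ((f (Fin.cons false y) + f (Fin.cons true y)) / 2)) := by
          simp_rw [exp_add, mul_expect, mul_comm]
      _ ≤ exp (l ^ 2 * c ^ 2 / 8)
            * exp (l * 𝔼 y, (f (Fin.cons false y) + f (Fin.cons true y)) / 2
              + m * (l ^ 2 * c ^ 2 / 8)) := by
          gcongr
          exact ih hf.average_cons
      _ = exp (l * 𝔼 z, f z + (m + 1 : ℕ) * (l ^ 2 * c ^ 2 / 8)) := by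
          rw [expect_fin_succ_bool f, ← exp_add]
          push_cast
          ring_nf

variable [Fintype ι]

lemma HasBoundedDifferences.expect_exp_mul_le {f : (ι → Bool) → ℝ} {c : ℝ}
    (hf : HasBoundedDifferences f c) (l : ℝ) :
    𝔼 z, exp (l * f z) ≤ exp (l * 𝔼 z, f z + Fintype.card ι * (l ^ 2 * c ^ 2 / 8)) := by
  let e : (ι → Bool) ≃ (Fin (Fintype.card ι) → Bool) :=
    (Fintype.equivFin ι).arrowCongr (Equiv.refl Bool)
  have hfe : HasBoundedDifferences (f ∘ e.symm) c := fun w i b => by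
    simpa [e, Equiv.arrowCongr, Function.update_comp_equiv] using
      hf (w ∘ Fintype.equivFin ι) ((Fintype.equivFin ι).symm i) b
  have hexpect (g : ℝ → ℝ) : 𝔼 z, g (f z) = 𝔼 w, g ((f ∘ e.symm) w) :=
    Fintype.expect_equiv e _ _ fun z => by simp
  rw [hexpect (fun r => exp (l * r)), show 𝔼 z, f z = 𝔼 w, (f ∘ e.symm) w from hexpect id]
  exact hfe.expect_exp_mul_le_of_fin l

lemma HasBoundedDifferences.card_lt_sub_expect_div_le_exp {f : (ι → Bool) → ℝ} {c : ℝ}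
    (hf : HasBoundedDifferences f c) {l : ℝ} (hl : 0 ≤ l) (t : ℝ) :
    (#{z | t < f z - 𝔼 w, f w} : ℝ) / 2 ^ Fintype.card ι
      ≤ exp (Fintype.card ι * (l ^ 2 * c ^ 2 / 8) - l * t) := by
  set μ := 𝔼 w, f w
  set m := Fintype.card ι
  have hmarkov := card_filter_lt_mul_exp_le_sum (fun z => f z - μ) hl t
  have hmgf : ∑ z, exp (l * (f z - μ)) ≤ 2 ^ m * exp (m * (l ^ 2 * c ^ 2 / 8)) :=
    calc ∑ z, exp (l * (f z - μ)) = 2 ^ m * ((𝔼 z, exp (l * f z)) / exp (l * μ)) := by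
          simp only [Fintype.expect_eq_sum_div_card, Fintype.card_fun, Fintype.card_bool,
            Nat.cast_pow, Nat.cast_ofNat, mul_sub, exp_sub, ← sum_div, m]
          field_simp
      _ ≤ 2 ^ m * (exp (l * μ + m * (l ^ 2 * c ^ 2 / 8)) / exp (l * μ)) := by
          gcongr _ * (?_ / _)
          exact hf.expect_exp_mul_le l
      _ = 2 ^ m * exp (m * (l ^ 2 * c ^ 2 / 8)) := by
          rw [← exp_sub, add_sub_cancel_left]
  rw [div_le_iff₀ (by positivity), exp_sub, div_mul_eq_mul_div, le_div_iff₀ (exp_pos _)]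
  linarith

lemma HasBoundedDifferences.card_lt_sub_expect_div_le {f : (ι → Bool) → ℝ} {c t : ℝ}
    (hf : HasBoundedDifferences f c) (ht : 0 ≤ t) :
    (#{z | t < f z - 𝔼 w, f w} : ℝ) / 2 ^ Fintype.card ι
      ≤ exp (-(2 * t ^ 2 / (Fintype.card ι * c ^ 2))) := by
  convert hf.card_lt_sub_expect_div_le_exp (l := 4 * t / (Fintype.card ι * c ^ 2))
    (by positivity) t using 2
  rcases eq_or_ne ((Fintype.card ι : ℝ) * c ^ 2) 0 with h | h
  · simp [h]
  · field_simp
    ring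

lemma HasBoundedDifferences.card_lt_abs_sub_expect_div_le {f : (ι → Bool) → ℝ} {c t : ℝ}
    (hf : HasBoundedDifferences f c) (ht : 0 ≤ t) :
    (#{z | t < |f z - 𝔼 w, f w|} : ℝ) / 2 ^ Fintype.card ι
      ≤ 2 * exp (-(2 * t ^ 2 / (Fintype.card ι * c ^ 2))) := by
  have hsplit : ({z | t < |f z - 𝔼 w, f w|} : Finset (ι → Bool))
      ⊆ ({z | t < f z - 𝔼 w, f w} : Finset (ι → Bool))
        ∪ ({z | t < (-f) z - 𝔼 w, (-f) w} : Finset (ι → Bool)) := by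
    intro z
    simp only [mem_filter, mem_univ, true_and, mem_union, Pi.neg_apply, expect_neg_distrib]
    intro h
    rcases lt_abs.1 h with h | h
    · exact Or.inl h
    · exact Or.inr (by linarith)
  calc (#{z | t < |f z - 𝔼 w, f w|} : ℝ) / 2 ^ Fintype.card ι
      ≤ (#{z | t < f z - 𝔼 w, f w} : ℝ) / 2 ^ Fintype.card ι
        + (#{z | t < (-f) z - 𝔼 w, (-f) w} : ℝ) / 2 ^ Fintype.card ι := by
        rw [← add_div]
        gcongr
        exact_mod_cast (card_le_card hsplit).trans (card_union_le _ _)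
    _ ≤ 2 * exp (-(2 * t ^ 2 / (Fintype.card ι * c ^ 2))) := by
        linarith [hf.card_lt_sub_expect_div_le ht, hf.neg.card_lt_sub_expect_div_le ht]

end BooleanCube

section GraphEncoding

abbrev EdgeSlot (V : Type*) := {e : Sym2 V // ¬ e.IsDiag}

variable {V : Type*}

open Classical in
noncomputable def edgeIndicatorEquiv (V : Type*) : SimpleGraph V ≃ (EdgeSlot V → Bool) where
  toFun G e := decide (e.1 ∈ G.edgeSet)
  invFun z := SimpleGraph.fromEdgeSet {e | ∃ h : ¬ e.IsDiag, z ⟨e, h⟩ = true}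
  left_inv G := by
    ext a b
    simp only [SimpleGraph.fromEdgeSet_adj, Set.mem_ofPred_eq, decide_eq_true_eq,
      SimpleGraph.mem_edgeSet]
    exact ⟨fun h => h.1.2, fun h => ⟨⟨by simpa using h.ne, h⟩, h.ne⟩⟩
  right_inv z := by
    ext e
    simp [SimpleGraph.edgeSet_fromEdgeSet, e.2]

lemma edgeIndicatorEquiv_symm_adj (z : EdgeSlot V → Bool) {a b : V} (hab : a ≠ b) :
    ((edgeIndicatorEquiv V).symm z).Adj a b ↔ z ⟨s(a, b), by simpa using hab⟩ = true := by
  simp [edgeIndicatorEquiv, hab]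

variable [DecidableEq V]

def EdgeSlot.within (S : Finset V) : Finset (EdgeSlot V) :=
  S.sym2.subtype (¬ ·.IsDiag)

lemma EdgeSlot.card_within (S : Finset V) : #(EdgeSlot.within S) = (#S).choose 2 := by
  rw [EdgeSlot.within, card_subtype, sym2_eq_image, Sym2.filter_image_mk_not_isDiag,
    Sym2.card_image_offDiag]

lemma isClique_edgeIndicatorEquiv_symm_iff (z : EdgeSlot V → Bool) (S : Finset V) :
    ((edgeIndicatorEquiv V).symm z).IsClique (S : Set V)
      ↔ ∀ e ∈ EdgeSlot.within S, z e = true := by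
  constructor
  · rintro hS ⟨e, he⟩ hmem
    induction e using Sym2.ind with
    | _ a b =>
      have hab : a ≠ b := by simpa using he
      rw [EdgeSlot.within, mem_subtype, mk_mem_sym2_iff] at hmem
      exact (edgeIndicatorEquiv_symm_adj z hab).1 (hS hmem.1 hmem.2 hab)
  · intro h a ha b hb hab
    exact (edgeIndicatorEquiv_symm_adj z hab).2
      (h _ (by simpa [EdgeSlot.within, mk_mem_sym2_iff] using ⟨ha, hb⟩))

open Classical in
lemma card_isClique_edgeIndicatorEquiv_symm_mul [Fintype V] (S : Finset V) :
    #{z | ((edgeIndicatorEquiv V).symm z).IsClique (S : Set V)} * 2 ^ (#S).choose 2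
      = 2 ^ Fintype.card (EdgeSlot V) := by
  rw [← EdgeSlot.card_within S, ← card_filter_forall_eq_true_mul_two_pow]
  congr 2
  ext z
  simp [isClique_edgeIndicatorEquiv_symm_iff]

end GraphEncoding

section CliqueCount

variable {V : Type*} [Fintype V] [DecidableEq V]

lemma card_filter_card_eq_and_mem_and_mem_le {u v : V} (huv : u ≠ v) (x : ℕ) :
    #{S : Finset V | #S = x ∧ u ∈ S ∧ v ∈ S} ≤ (Fintype.card V).choose (x - 2) :=
  calc #{S : Finset V | #S = x ∧ u ∈ S ∧ v ∈ S}
      ≤ #(powersetCard (x - 2) (univ : Finset V)) := by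
        refine card_le_card_of_injOn (· \ {u, v}) (fun S hS => ?_) (fun S hS T hT hST => ?_)
        · obtain ⟨hcard, hu, hv⟩ := (mem_filter.1 hS).2
          rw [mem_coe, mem_powersetCard_univ,
            card_sdiff_of_subset (by simp [insert_subset_iff, *]), card_pair huv, hcard]
        · obtain ⟨-, hu, hv⟩ := (mem_filter.1 hS).2
          obtain ⟨-, hu', hv'⟩ := (mem_filter.1 hT).2
          rw [← sdiff_union_of_subset (show {u, v} ⊆ S by simp [insert_subset_iff, *]),
            ← sdiff_union_of_subset (show {u, v} ⊆ T by simp [insert_subset_iff, *])]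
          exact congrArg (· ∪ {u, v}) hST
    _ = (Fintype.card V).choose (x - 2) := by rw [card_powersetCard, card_univ]

lemma card_cliqueFinset_le_add {G H : SimpleGraph V} [DecidableRel G.Adj] [DecidableRel H.Adj]
    {u v : V} (huv : u ≠ v) (hGH : ∀ a b, s(a, b) ≠ s(u, v) → G.Adj a b → H.Adj a b) (x : ℕ) :
    #(G.cliqueFinset x) ≤ #(H.cliqueFinset x) + (Fintype.card V).choose (x - 2) := by
  have hsub : G.cliqueFinset x
      ⊆ H.cliqueFinset x ∪ ({S | #S = x ∧ u ∈ S ∧ v ∈ S} : Finset (Finset V)) := by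
    intro S hS
    rw [SimpleGraph.mem_cliqueFinset_iff, SimpleGraph.isNClique_iff] at hS
    by_cases huvS : u ∈ S ∧ v ∈ S
    · exact mem_union_right _ (by simp [hS.2, huvS])
    refine mem_union_left _ ?_
    rw [SimpleGraph.mem_cliqueFinset_iff, SimpleGraph.isNClique_iff]
    refine ⟨fun a ha b hb hab => hGH a b (fun he => huvS ?_) (hS.1 ha hb hab), hS.2⟩
    rcases Sym2.eq_iff.1 he with ⟨rfl, rfl⟩ | ⟨rfl, rfl⟩
    exacts [⟨ha, hb⟩, ⟨hb, ha⟩]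
  exact (card_le_card hsub).trans <| (card_union_le _ _).trans <|
    Nat.add_le_add_left (card_filter_card_eq_and_mem_and_mem_le huv x) _

lemma abs_card_cliqueFinset_sub_le {G H : SimpleGraph V} [DecidableRel G.Adj]
    [DecidableRel H.Adj] {u v : V} (huv : u ≠ v)
    (hGH : ∀ a b, s(a, b) ≠ s(u, v) → (G.Adj a b ↔ H.Adj a b)) (x : ℕ) :
    |(#(G.cliqueFinset x) : ℝ) - #(H.cliqueFinset x)| ≤ (Fintype.card V).choose (x - 2) := by
  have h₁ : (#(G.cliqueFinset x) : ℝ)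
      ≤ #(H.cliqueFinset x) + (Fintype.card V).choose (x - 2) := by
    exact_mod_cast card_cliqueFinset_le_add huv (fun a b h => (hGH a b h).1) x
  have h₂ : (#(H.cliqueFinset x) : ℝ)
      ≤ #(G.cliqueFinset x) + (Fintype.card V).choose (x - 2) := by
    exact_mod_cast card_cliqueFinset_le_add huv (fun a b h => (hGH a b h).2) x
  rw [abs_sub_le_iff]
  constructor <;> linarith

end CliqueCount

lemma numCliques_eq_card_cliqueFinset {n : ℕ} (G : SimpleGraph (Fin n)) [DecidableRel G.Adj]
    (x : ℕ) : numCliques G x = #(G.cliqueFinset x) := by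
  rw [numCliques, Nat.card_eq_fintype_card, Fintype.card_subtype]
  congr 1
  ext S
  simp [SimpleGraph.isNClique_iff, and_comm]

lemma numCliques_eq_choose_of_le_one {n x : ℕ} (G : SimpleGraph (Fin n)) (hx : x ≤ 1) :
    numCliques G x = n.choose x := by
  classical
  rw [numCliques_eq_card_cliqueFinset,
    show n.choose x = #(powersetCard x (univ : Finset (Fin n))) by simp]
  congr 1
  ext S
  simp only [SimpleGraph.mem_cliqueFinset_iff, SimpleGraph.isNClique_iff, mem_powersetCard,
    subset_univ, true_and, and_iff_right_iff_imp]
  intro hS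
  exact SimpleGraph.IsClique.of_subsingleton fun a ha b hb => card_le_one.1 (hS ▸ hx) a ha b hb

lemma numCliques_eq_zero_of_lt {n x : ℕ} (G : SimpleGraph (Fin n)) (hx : n < x) :
    numCliques G x = 0 := by
  classical
  rw [numCliques_eq_card_cliqueFinset, ← Nat.le_zero, ← Nat.choose_eq_zero_of_lt hx]
  simpa using G.card_cliqueFinset_le (n := x)

lemma numCliques_eq_of_lt_two_or_lt {n x : ℕ} (G : SimpleGraph (Fin n)) (h : x < 2 ∨ n < x) :
    (numCliques G x : ℝ) = (2 : ℝ) ^ (-((x.choose 2 : ℕ) : ℤ)) * (n.choose x : ℝ) := by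
  rcases h with hx | hx
  · rw [numCliques_eq_choose_of_le_one G (by omega), Nat.choose_eq_zero_of_lt hx]
    simp
  · rw [numCliques_eq_zero_of_lt G hx, Nat.choose_eq_zero_of_lt hx]
    simp

lemma natCard_lt_abs_numCliques_sub_eq_zero {n x : ℕ} (h : x < 2 ∨ n < x) {t : ℝ} (ht : 0 ≤ t) :
    Nat.card {G : SimpleGraph (Fin n) //
      t < |(numCliques G x : ℝ) - (2 : ℝ) ^ (-((x.choose 2 : ℕ) : ℤ)) * (n.choose x : ℝ)|} = 0 :=
  Nat.card_eq_zero.2 <| .inl ⟨fun ⟨G, hG⟩ => by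
    rw [numCliques_eq_of_lt_two_or_lt G h, sub_self, abs_zero] at hG
    linarith⟩

open Classical in
lemma expect_numCliques (n x : ℕ) :
    𝔼 z, (numCliques ((edgeIndicatorEquiv (Fin n)).symm z) x : ℝ)
      = (2 : ℝ) ^ (-((x.choose 2 : ℕ) : ℤ)) * (n.choose x : ℝ) := by
  set r := fun z (S : Finset (Fin n)) =>
    ((edgeIndicatorEquiv (Fin n)).symm z).IsClique (S : Set (Fin n))
  have hN (z : EdgeSlot (Fin n) → Bool) : numCliques ((edgeIndicatorEquiv (Fin n)).symm z) x
      = #((powersetCard x univ).bipartiteAbove r z) := by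
    rw [numCliques_eq_card_cliqueFinset]
    congr 1
    ext S
    simp [bipartiteAbove, r, SimpleGraph.isNClique_iff, mem_powersetCard, and_comm]
  have hS : ∀ S ∈ powersetCard x univ, (#(univ.bipartiteBelow r S) : ℝ)
      = 2 ^ Fintype.card (EdgeSlot (Fin n)) * 2 ^ (-((x.choose 2 : ℕ) : ℤ)) := fun S hS => by
    have h := card_isClique_edgeIndicatorEquiv_symm_mul S
    rw [(mem_powersetCard.1 hS).2] at h
    rw [zpow_neg, zpow_natCast, eq_mul_inv_iff_mul_eq₀ (by positivity)]
    exact_mod_cast h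
  rw [Fintype.expect_eq_sum_div_card]
  simp_rw [hN]
  rw [← Nat.cast_sum, sum_card_bipartiteAbove_eq_sum_card_bipartiteBelow, Nat.cast_sum,
    sum_congr rfl hS, sum_const, card_powersetCard, card_univ, Fintype.card_fin, Fintype.card_fun,
    Fintype.card_bool, nsmul_eq_mul, Nat.cast_pow, Nat.cast_ofNat]
  field_simp

lemma hasBoundedDifferences_numCliques (n x : ℕ) :
    HasBoundedDifferences (fun z => (numCliques ((edgeIndicatorEquiv (Fin n)).symm z) x : ℝ))
      (n.choose (x - 2)) := by
  classical
  rintro z ⟨e, he⟩ b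
  induction e using Sym2.ind with
  | _ u v =>
    have huv : u ≠ v := by simpa using he
    have hagree : ∀ a c, s(a, c) ≠ s(u, v) → (((edgeIndicatorEquiv (Fin n)).symm z).Adj a c ↔
        ((edgeIndicatorEquiv (Fin n)).symm (Function.update z ⟨s(u, v), he⟩ b)).Adj a c) := by
      intro a c hac
      rcases eq_or_ne a c with rfl | hne
      · simp
      rw [edgeIndicatorEquiv_symm_adj _ hne, edgeIndicatorEquiv_symm_adj _ hne,
        Function.update_of_ne (by simpa [Subtype.ext_iff] using hac)]
    simp only [numCliques_eq_card_cliqueFinset]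
    simpa using abs_card_cliqueFinset_sub_le huv hagree x

lemma natCard_lt_abs_numCliques_sub_div_le (n x : ℕ) {t : ℝ} (ht : 0 ≤ t) :
    (Nat.card {G : SimpleGraph (Fin n) //
        t < |(numCliques G x : ℝ) - (2 : ℝ) ^ (-((x.choose 2 : ℕ) : ℤ)) * (n.choose x : ℝ)|} : ℝ)
      / Nat.card (SimpleGraph (Fin n))
      ≤ 2 * exp (-(2 * t ^ 2 / (n.choose 2 * (n.choose (x - 2) : ℝ) ^ 2))) := by
  classical
  have hslots : Fintype.card (EdgeSlot (Fin n)) = n.choose 2 := by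
    rw [Sym2.card_subtype_not_diag, Fintype.card_fin]
  have hbound := (hasBoundedDifferences_numCliques n x).card_lt_abs_sub_expect_div_le ht
  rw [expect_numCliques, hslots] at hbound
  rw [Nat.card_congr (edgeIndicatorEquiv (Fin n)).subtypeEquivOfSubtype',
    Nat.card_congr (edgeIndicatorEquiv (Fin n)), Nat.card_eq_fintype_card, Fintype.card_subtype,
    Nat.card_eq_fintype_card, Fintype.card_fun, Fintype.card_bool, hslots]
  exact_mod_cast hbound

lemma choose_two_mul_choose_sq_le {n x : ℕ} (hx : 2 ≤ x) :
    (n.choose 2 : ℝ) * (n.choose (x - 2) : ℝ) ^ 2 ≤ ((n : ℝ) ^ (x - 1) / (x - 2)!) ^ 2 / 2 := by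
  have h₂ : (n.choose 2 : ℝ) ≤ (n : ℝ) ^ 2 / 2 := by
    rw [Nat.cast_choose_two]
    gcongr
    nlinarith
  have hx₂ : (n.choose (x - 2) : ℝ) ≤ (n : ℝ) ^ (x - 2) / (x - 2)! := Nat.choose_le_pow_div _ _
  calc (n.choose 2 : ℝ) * (n.choose (x - 2) : ℝ) ^ 2
      ≤ (n : ℝ) ^ 2 / 2 * ((n : ℝ) ^ (x - 2) / (x - 2)!) ^ 2 := by gcongr
    _ = ((n : ℝ) ^ (x - 1) / (x - 2)!) ^ 2 / 2 := by
        rw [show x - 1 = (x - 2) + 1 by omega]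
        ring

lemma inv_factorial_sub_two_le {x : ℕ} (hx : 2 ≤ x) : ((x - 2)! : ℝ)⁻¹ ≤ (x : ℝ) ^ 2 / x ! := by
  have h : (x ! : ℝ) ≤ (x - 2)! * (x : ℝ) ^ 2 := by
    rw [← Nat.factorial_mul_descFactorial hx]
    exact_mod_cast Nat.mul_le_mul_left _ (Nat.descFactorial_le_pow x 2)
  rw [inv_le_iff_one_le_mul₀' (by positivity), ← mul_div_assoc, le_div_iff₀ (by positivity)]
  linarith

lemma le_two_mul_sq_div_choose_two_mul_choose_sq {L : ℝ} (hL : 1 ≤ L) {x n : ℕ} (hx : 2 ≤ x)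
    (hxn : x ≤ n) :
    L ≤ 2 * (exp 1 * L * ((x : ℝ) ^ 2 / x !) * (n : ℝ) ^ (x - 1)) ^ 2
      / (n.choose 2 * (n.choose (x - 2) : ℝ) ^ 2) := by
  set D := (n : ℝ) ^ (x - 1) / (x - 2)!
  have hM : 0 < (n.choose 2 : ℝ) * (n.choose (x - 2) : ℝ) ^ 2 := by
    have := Nat.choose_pos (show 2 ≤ n by omega)
    have := Nat.choose_pos (show x - 2 ≤ n by omega)
    positivity
  have he : 1 ≤ exp 1 := one_le_exp zero_le_one
  have hT : exp 1 * L * D ≤ exp 1 * L * ((x : ℝ) ^ 2 / x !) * (n : ℝ) ^ (x - 1) :=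
    calc exp 1 * L * D = exp 1 * L * ((x - 2)! : ℝ)⁻¹ * (n : ℝ) ^ (x - 1) := by ring
      _ ≤ _ := by gcongr; exact inv_factorial_sub_two_le hx
  rw [le_div_iff₀ hM]
  calc L * ((n.choose 2 : ℝ) * (n.choose (x - 2) : ℝ) ^ 2) ≤ L * (D ^ 2 / 2) := by
        gcongr
        exact choose_two_mul_choose_sq_le hx
    _ ≤ 2 * (exp 1 * L * D) ^ 2 := by
        nlinarith [mul_nonneg (mul_nonneg (by linarith : (0 : ℝ) ≤ L) (sq_nonneg D))
          (by nlinarith : (0 : ℝ) ≤ 2 * exp 1 ^ 2 * L - 1 / 2)]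
    _ ≤ _ := by gcongr

lemma two_mul_exp_neg_two_sub_log_lt {ε : ℝ} (hε : 0 < ε) : 2 * exp (-(2 - log ε)) < ε := by
  have : 2 < exp 2 := by linarith [add_one_le_exp (2 : ℝ)]
  rw [neg_sub, exp_sub, exp_log hε, mul_div_assoc', div_lt_iff₀ (exp_pos 2)]
  nlinarith

theorem numCliques_concentration_general (ε : ℝ) (hε : ε ∈ Set.Ioo (0 : ℝ) 1) (x n : ℕ) :
    (Nat.card {G : SimpleGraph (Fin n) //
        Real.exp 1 * (2 - Real.log ε) * ((x : ℝ) ^ 2 / (Nat.factorial x : ℝ))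
            * (n : ℝ) ^ ((x : ℝ) - 1)
          < |(numCliques G x : ℝ)
              - (2 : ℝ) ^ (-((Nat.choose x 2 : ℕ) : ℤ)) * (Nat.choose n x : ℝ)|} : ℝ)
      / (Nat.card (SimpleGraph (Fin n)) : ℝ) < ε := by
  obtain ⟨hε₀, hε₁⟩ := hε
  have hL : 2 ≤ 2 - log ε := by linarith [log_neg hε₀ hε₁]
  have hT : 0 ≤ exp 1 * (2 - log ε) * ((x : ℝ) ^ 2 / x !) * (n : ℝ) ^ ((x : ℝ) - 1) :=
    mul_nonneg (mul_nonneg (mul_nonneg (exp_pos 1).le (by linarith)) (by positivity))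
      (by positivity)
  by_cases hx : 2 ≤ x ∧ x ≤ n
  · obtain ⟨hx, hxn⟩ := hx
    rw [← Nat.cast_pred (by omega), rpow_natCast] at hT ⊢
    calc _ ≤ _ := natCard_lt_abs_numCliques_sub_div_le n x hT
      _ ≤ 2 * exp (-(2 - log ε)) := by
          gcongr
          exact le_two_mul_sq_div_choose_two_mul_choose_sq (by linarith) hx hxn
      _ < ε := two_mul_exp_neg_two_sub_log_lt hε₀
  · rw [natCard_lt_abs_numCliques_sub_eq_zero (by omega) hT, Nat.cast_zero, zero_div]
    exact hε₀

/-- For every `ε ∈ (0,1)` and every nonnegative integer `x`, if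
`n > x²·(2e − e·ln ε)·(2e + 2 − e·ln ε)`, then for `G ← G(n,1/2)` (uniform over all
graphs on `[n]`), the probability that
`|N_x(G) − 2^{−C(x,2)}·C(n,x)| > e·(2 − ln ε)·(x²/x!)·n^{x−1}` is less than `ε`. -/
theorem numCliques_concentration (ε : ℝ) (hε : ε ∈ Set.Ioo (0 : ℝ) 1) (x n : ℕ)
    (hn : (x : ℝ) ^ 2 * (2 * Real.exp 1 - Real.exp 1 * Real.log ε)
        * (2 * Real.exp 1 + 2 - Real.exp 1 * Real.log ε) < (n : ℝ)) :
    (Nat.card {G : SimpleGraph (Fin n) //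
        Real.exp 1 * (2 - Real.log ε) * ((x : ℝ) ^ 2 / (Nat.factorial x : ℝ))
            * (n : ℝ) ^ ((x : ℝ) - 1)
          < |(numCliques G x : ℝ)
              - (2 : ℝ) ^ (-((Nat.choose x 2 : ℕ) : ℤ)) * (Nat.choose n x : ℝ)|} : ℝ)
      / (Nat.card (SimpleGraph (Fin n)) : ℝ) < ε :=
  numCliques_concentration_general ε hε x n
end

section
/- Let x ≥ 2 and q ≥ 1 be integers and let n be an integer with n ≥ x²·q·(q+2). Then the number of multisets S = {V₁,…,V_q} of cardinality q whose elements are x-element subsets of [n], and which have the property that for every j ∈ {1,…,q} there exists i ≠ j with |V_i ∩ V_j| ≥ 2, is at most 2·n^{xq−q}·(x²/x!)^q. -/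
/-!
Call a multiset of sets *linked* if every member shares at least two points with another
member. Inside a linked multiset take a longest list `V₁, …, V_k` of its members in which
every `Vᵢ` with `i > 1` shares two points with some earlier `Vⱼ`. Then `k ≥ 2`, and by
maximality the remaining members again form a linked multiset. So the number `L_j` of linked
multisets of size `j` satisfies `L_j ≤ ∑_{k=2}^{j} T_k L_{j-k}`, where `T_k` counts such
tree-ordered lists. Choosing the sets one at a time gives `T_{k+1} ≤ k D T_k`, where
`D = C(x,2) C(n-2,x-2)` bounds the number of `x`-sets sharing two points with a given one;
for `n ≥ q x²` this yields `T_k ≤ 2 (w/2)^k` for `2 ≤ k ≤ q`, with `w = n^(x-1) x² / x!`.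
As `∑_{k≥2} 2^(1-k) ≤ 1`, induction on `j` gives `L_j ≤ w^j`.
-/

open Finset

variable {α : Type*}

def IsTreeOrdered (r : α → α → Prop) {k : ℕ} (f : Fin k → α) : Prop :=
  ∀ i : Fin k, 0 < (i : ℕ) → ∃ j < i, r (f j) (f i)

theorem isTreeOrdered_snoc_iff {r : α → α → Prop} {k : ℕ} {f : Fin k → α} {a : α} :
    IsTreeOrdered r (Fin.snoc f a : Fin (k + 1) → α) ↔
      IsTreeOrdered r f ∧ (0 < k → ∃ j, r (f j) a) := by
  simp [IsTreeOrdered, Fin.forall_fin_succ', Fin.exists_fin_succ',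
    (Fin.castSucc_lt_last _).not_gt]
  simp only [Fin.lt_def, Fin.val_castSucc, Fin.val_last, Fin.val_zero]

theorem coe_ofFn_snoc {k : ℕ} (f : Fin k → α) (a : α) :
    (List.ofFn (Fin.snoc f a : Fin (k + 1) → α) : Multiset α) = a ::ₘ List.ofFn f := by
  rw [List.ofFn_succ']
  simp [List.perm_append_singleton]

instance (r : α → α → Prop) [DecidableRel r] (k : ℕ) :
    DecidablePred (IsTreeOrdered r (k := k)) := fun f => by
  unfold IsTreeOrdered; infer_instance

def treeSeqs (r : α → α → Prop) [DecidableRel r] (P : Finset α) (k : ℕ) :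
    Finset (Fin k → α) :=
  (Fintype.piFinset fun _ => P).filter (IsTreeOrdered r)

section TreeSeqs

variable {r : α → α → Prop} [DecidableRel r]

theorem card_treeSeqs_one_le (P : Finset α) : #(treeSeqs r P 1) ≤ #P :=
  (card_le_card (filter_subset _ _)).trans (by simp)

variable [DecidableEq α]

theorem card_filter_exists_le {k : ℕ} (P : Finset α) (f : Fin k → α) {D : ℕ}
    (hD : ∀ i, #(P.filter (r (f i))) ≤ D) :
    #(P.filter fun a => ∃ i, r (f i) a) ≤ k * D := by
  calc #(P.filter fun a => ∃ i, r (f i) a) = #(univ.biUnion fun i => P.filter (r (f i))) := by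
        congr 1; ext; simp [and_comm]
    _ ≤ ∑ i, #(P.filter (r (f i))) := card_biUnion_le
    _ ≤ k * D := by
        simpa using sum_le_card_nsmul univ _ _ fun i _ => hD i

theorem card_treeSeqs_succ_le {P : Finset α} {D : ℕ} (hD : ∀ a ∈ P, #(P.filter (r a)) ≤ D)
    {k : ℕ} (hk : 0 < k) : #(treeSeqs r P (k + 1)) ≤ #(treeSeqs r P k) * (k * D) := by
  have hsub : treeSeqs r P (k + 1) ⊆ (treeSeqs r P k).biUnion fun f =>
      (P.filter fun a => ∃ j, r (f j) a).image (Fin.snoc (α := fun _ => α) f) := by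
    intro g hg
    simp only [treeSeqs, mem_filter, Fintype.mem_piFinset] at hg
    obtain ⟨hinit, hlast⟩ := isTreeOrdered_snoc_iff.1 ((Fin.snoc_init_self g).symm ▸ hg.2)
    simp only [mem_biUnion, mem_image, treeSeqs, mem_filter, Fintype.mem_piFinset]
    exact ⟨Fin.init g, ⟨fun i => hg.1 _, hinit⟩, g (Fin.last k), ⟨hg.1 _, hlast hk⟩,
      Fin.snoc_init_self g⟩
  calc #(treeSeqs r P (k + 1))
      ≤ ∑ f ∈ treeSeqs r P k,
          #((P.filter fun a => ∃ j, r (f j) a).image (Fin.snoc (α := fun _ => α) f)) :=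
        (card_le_card hsub).trans card_biUnion_le
    _ ≤ ∑ f ∈ treeSeqs r P k, k * D := by
        refine sum_le_sum fun f hf => card_image_le.trans ?_
        have hfP : ∀ j, f j ∈ P := by
          simpa [treeSeqs] using (mem_filter.1 hf).1
        simpa using card_filter_exists_le P f fun j => hD _ (hfP j)
    _ = #(treeSeqs r P k) * (k * D) := by simp

end TreeSeqs

variable [DecidableEq α]

def IsLinked (r : α → α → Prop) (S : Multiset α) : Prop :=
  ∀ a ∈ S, ∃ b ∈ S.erase a, r a b

theorem mem_erase_sub_of_notMem {S u : Multiset α} {a b : α} (hb : b ∈ S.erase a)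
    (hbu : b ∉ u) : b ∈ (S - u).erase a := by
  rw [← Multiset.sub_singleton, tsub_right_comm, Multiset.sub_singleton, Multiset.mem_sub,
    Multiset.count_eq_zero_of_notMem hbu]
  exact Multiset.count_pos.2 hb

theorem IsLinked.exists_isTreeOrdered_pair_le {r : α → α → Prop} {S : Multiset α}
    (hS : IsLinked r S) (hS0 : S ≠ 0) :
    ∃ f : Fin 2 → α, IsTreeOrdered r f ∧ ↑(List.ofFn f) ≤ S := by
  obtain ⟨a, ha⟩ := Multiset.exists_mem_of_ne_zero hS0
  obtain ⟨b, hb, hab⟩ := hS a ha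
  refine ⟨![a, b], fun i hi => ⟨0, ?_⟩, ?_⟩
  · fin_cases i
    · simp at hi
    · exact ⟨by decide, hab⟩
  · rw [← Multiset.cons_erase ha]
    exact Multiset.cons_le_cons a (Multiset.singleton_le.2 hb)

theorem IsLinked.exists_isTreeOrdered_add {r : α → α → Prop} [Std.Symm r] {S : Multiset α}
    (hS : IsLinked r S) (hS0 : S ≠ 0) :
    ∃ (k : ℕ) (f : Fin k → α) (t : Multiset α),
      2 ≤ k ∧ IsTreeOrdered r f ∧ IsLinked r t ∧ S = ↑(List.ofFn f) + t := by
  classical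
  let Q (k : ℕ) : Prop := ∃ f : Fin k → α, IsTreeOrdered r f ∧ ↑(List.ofFn f) ≤ S
  have hQ_le : ∀ k, Q k → k ≤ Multiset.card S := by
    rintro k ⟨f, -, hf⟩
    simpa using Multiset.card_le_card hf
  have hQ2 : Q 2 := hS.exists_isTreeOrdered_pair_le hS0
  obtain ⟨f, hf, hfS⟩ := Nat.findGreatest_spec (hQ_le 2 hQ2) hQ2
  refine ⟨_, f, S - ↑(List.ofFn f), Nat.le_findGreatest (hQ_le 2 hQ2) hQ2, hf, ?_,
    (add_tsub_cancel_of_le hfS).symm⟩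
  intro a ha
  obtain ⟨b, hb, hab⟩ := hS a (Multiset.mem_of_le tsub_le_self ha)
  by_cases hbf : b ∈ (List.ofFn f : Multiset α)
  · -- `a` has a partner in the tree, so appending `a` would contradict maximality
    exfalso
    obtain ⟨j, rfl⟩ := List.mem_ofFn.1 (Multiset.mem_coe.1 hbf)
    have hQ : Q (Nat.findGreatest Q (Multiset.card S) + 1) := by
      refine ⟨Fin.snoc f a, isTreeOrdered_snoc_iff.2 ⟨hf, fun _ => ⟨j, symm hab⟩⟩, ?_⟩
      rw [coe_ofFn_snoc, ← Multiset.singleton_add]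
      calc {a} + ↑(List.ofFn f) ≤ (S - ↑(List.ofFn f)) + ↑(List.ofFn f) :=
            by gcongr; exact Multiset.singleton_le.2 ha
        _ = S := tsub_add_cancel_of_le hfS
    exact Nat.findGreatest_is_greatest (Nat.lt_succ_self _) (hQ_le _ hQ) hQ
  · exact ⟨b, mem_erase_sub_of_notMem hb hbf, hab⟩

def linkedMultisets (P : Finset α) (r : α → α → Prop) (j : ℕ) : Set (Multiset α) :=
  {S | Multiset.card S = j ∧ (∀ a ∈ S, a ∈ P) ∧ IsLinked r S}

theorem finite_linkedMultisets (P : Finset α) (r : α → α → Prop) (j : ℕ) :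
    (linkedMultisets P r j).Finite := by
  refine ((P.sym j).finite_toSet.image ((↑) : Sym α j → Multiset α)).subset ?_
  rintro S ⟨hS, hSP, -⟩
  exact ⟨⟨S, hS⟩, mem_sym_iff.2 hSP, rfl⟩

theorem card_linkedMultisets_le_sum {r : α → α → Prop} [DecidableRel r] [Std.Symm r]
    (P : Finset α) {j : ℕ} (hj : 0 < j) :
    Nat.card (linkedMultisets P r j) ≤
      ∑ k ∈ Icc 2 j, #(treeSeqs r P k) * Nat.card (linkedMultisets P r (j - k)) := by
  have hdecomp : ∀ S : linkedMultisets P r j, ∃ (k : ℕ) (f : Fin k → α) (t : Multiset α),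
      2 ≤ k ∧ IsTreeOrdered r f ∧ IsLinked r t ∧ S.1 = ↑(List.ofFn f) + t := fun S =>
    S.2.2.2.exists_isTreeOrdered_add (Multiset.card_pos.1 (by rw [S.2.1]; exact hj))
  choose k f t hk hf ht hS using hdecomp
  have hcard : ∀ S, k S + Multiset.card (t S) = j := fun S => by
    simpa [hS S] using S.2.1
  have hmem : ∀ S, ∀ a ∈ (↑(List.ofFn (f S)) + t S : Multiset α), a ∈ P :=
    fun S => hS S ▸ S.2.2.1
  have := fun m => (finite_linkedMultisets P r m).to_subtype
  let Φ : linkedMultisets P r j →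
      Σ m : Icc 2 j, treeSeqs r P m × linkedMultisets P r (j - m) := fun S =>
    ⟨⟨k S, mem_Icc.2 ⟨hk S, by have := hcard S; omega⟩⟩,
      ⟨f S, by simpa [treeSeqs, hf S] using fun i => hmem S _ (by simp)⟩,
      ⟨t S, show _ = j - k S by have := hcard S; omega,
        fun a ha => hmem S a (by simp [ha]), ht S⟩⟩
  have hΦ : Function.Injective Φ := by
    intro S₁ S₂ h
    rw [Subtype.ext_iff, hS S₁, hS S₂]
    exact congrArg (fun x => (↑(List.ofFn x.2.1.1) : Multiset α) + x.2.2.1) h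
  calc Nat.card (linkedMultisets P r j)
      ≤ Nat.card (Σ m : Icc 2 j, treeSeqs r P m × linkedMultisets P r (j - m)) :=
        Nat.card_le_card_of_injective Φ hΦ
    _ = ∑ k ∈ Icc 2 j, #(treeSeqs r P k) * Nat.card (linkedMultisets P r (j - k)) := by
        rw [Nat.card_sigma, ← sum_coe_sort (Icc 2 j)]
        simp only [Nat.card_prod, Nat.card_eq_fintype_card, Fintype.card_coe]

theorem linkedMultisets_zero (P : Finset α) (r : α → α → Prop) :
    linkedMultisets P r 0 = {0} := by
  ext S
  simp +contextual [linkedMultisets, IsLinked]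

theorem sum_Icc_two_half_pow_le (j : ℕ) : ∑ k ∈ Icc 2 j, (1 / 2 : ℝ) ^ k ≤ 1 / 2 := by
  rw [← Ico_add_one_right_eq_Icc]
  refine (geom_sum_Ico_le_of_lt_one (by norm_num) (by norm_num)).trans_eq ?_
  norm_num

theorem card_linkedMultisets_le_pow {r : α → α → Prop} [DecidableRel r] [Std.Symm r]
    (P : Finset α) {q : ℕ} {w : ℝ} (hw : 0 ≤ w)
    (hT : ∀ k, 2 ≤ k → k ≤ q → (#(treeSeqs r P k) : ℝ) ≤ 2 * (w / 2) ^ k) :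
    ∀ j ≤ q, (Nat.card (linkedMultisets P r j) : ℝ) ≤ w ^ j := by
  intro j
  induction j using Nat.strong_induction_on with
  | _ j ih =>
    intro hjq
    rcases Nat.eq_zero_or_pos j with rfl | hj
    · simp [linkedMultisets_zero]
    calc (Nat.card (linkedMultisets P r j) : ℝ)
        ≤ ∑ k ∈ Icc 2 j,
            (#(treeSeqs r P k) : ℝ) * Nat.card (linkedMultisets P r (j - k)) := by
          exact_mod_cast card_linkedMultisets_le_sum P hj
      _ ≤ ∑ k ∈ Icc 2 j, 2 * (w / 2) ^ k * w ^ (j - k) := by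
          refine sum_le_sum fun k hk => ?_
          obtain ⟨hk2, hkj⟩ := mem_Icc.1 hk
          exact mul_le_mul (hT k hk2 (hkj.trans hjq)) (ih _ (by omega) (by omega)) (by positivity)
            (by positivity)
      _ = 2 * w ^ j * ∑ k ∈ Icc 2 j, (1 / 2 : ℝ) ^ k := by
          rw [mul_sum]
          refine sum_congr rfl fun k hk => ?_
          rw [div_pow, one_div_pow, ← pow_sub_mul_pow w (mem_Icc.1 hk).2]
          ring
      _ ≤ 2 * w ^ j * (1 / 2) := by gcongr; exact sum_Icc_two_half_pow_le j
      _ = w ^ j := by ring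

def SharesTwo {β : Type*} [DecidableEq β] (V W : Finset β) : Prop := 2 ≤ #(V ∩ W)

instance {β : Type*} [DecidableEq β] : DecidableRel (SharesTwo (β := β)) := fun V W => by
  unfold SharesTwo; infer_instance

instance {β : Type*} [DecidableEq β] : Std.Symm (SharesTwo (β := β)) :=
  ⟨fun V W h => by rwa [SharesTwo, inter_comm]⟩

theorem card_filter_sharesTwo_le {β : Type*} [Fintype β] [DecidableEq β] (V : Finset β)
    (x : ℕ) : #((powersetCard x univ).filter (SharesTwo V)) ≤
      (#V).choose 2 * (Fintype.card β - 2).choose (x - 2) := by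
  have hsub : (powersetCard x univ).filter (SharesTwo V) ⊆
      (powersetCard 2 V).biUnion fun E => (powersetCard (x - 2) Eᶜ).image (· ∪ E) := by
    intro W hW
    obtain ⟨hWx, hVW⟩ := mem_filter.1 hW
    obtain ⟨E, hE, hE2⟩ := exists_subset_card_eq hVW
    have hEW : E ⊆ W := hE.trans inter_subset_right
    simp only [mem_biUnion, mem_powersetCard, mem_image]
    refine ⟨E, ⟨hE.trans inter_subset_left, hE2⟩, W \ E, ⟨?_, ?_⟩,
      sdiff_union_of_subset hEW⟩
    · exact fun a ha => mem_compl.2 (mem_sdiff.1 ha).2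
    · rw [card_sdiff_of_subset hEW, mem_powersetCard_univ.1 hWx, hE2]
  calc _ ≤ ∑ E ∈ powersetCard 2 V, #((powersetCard (x - 2) Eᶜ).image (· ∪ E)) :=
        (card_le_card hsub).trans card_biUnion_le
    _ ≤ ∑ E ∈ powersetCard 2 V, (Fintype.card β - 2).choose (x - 2) := by
        refine sum_le_sum fun E hE => card_image_le.trans_eq ?_
        rw [card_powersetCard, card_compl, (mem_powersetCard.1 hE).2]
    _ = _ := by rw [sum_const, card_powersetCard, smul_eq_mul]

noncomputable def cliqueWeight (n x : ℕ) : ℝ := n ^ (x - 1) * (x ^ 2 / x.factorial)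

theorem cliqueWeight_nonneg (n x : ℕ) : 0 ≤ cliqueWeight n x := by
  unfold cliqueWeight; positivity

theorem sq_mul_choose_le_cliqueWeight {n x : ℕ} (hx : 1 ≤ x) :
    (x : ℝ) ^ 2 * n.choose x ≤ n * cliqueWeight n x := by
  have hpow : (n : ℝ) ^ x = n * n ^ (x - 1) := by rw [← pow_succ', Nat.sub_add_cancel hx]
  calc (x : ℝ) ^ 2 * n.choose x ≤ x ^ 2 * (n ^ x / x.factorial) := by
        gcongr; exact Nat.choose_le_pow_div x n
    _ = n * cliqueWeight n x := by rw [cliqueWeight, hpow]; ring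

theorem two_mul_mul_choose_mul_choose_le_cliqueWeight {n x : ℕ} (hx : 2 ≤ x) :
    2 * n * ((x.choose 2 * (n - 2).choose (x - 2) : ℕ) : ℝ) ≤ x ^ 2 * cliqueWeight n x := by
  obtain ⟨y, rfl⟩ : ∃ y, x = y + 2 := ⟨x - 2, by omega⟩
  have h2 : ((y + 2).choose 2 : ℝ) = (y + 2) * (y + 1) / 2 := by
    rw [Nat.cast_choose_two]; push_cast; ring
  have hchoose : ((n - 2).choose y : ℝ) ≤ n ^ y / y.factorial :=
    (Nat.choose_le_pow_div y (n - 2)).trans (by gcongr; exact_mod_cast Nat.sub_le n 2)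
  simp only [Nat.add_sub_cancel, cliqueWeight, Nat.factorial_succ]
  push_cast
  rw [h2]
  calc 2 * (n : ℝ) * ((y + 2) * (y + 1) / 2 * ((n - 2).choose y : ℕ))
      ≤ 2 * n * ((y + 2) * (y + 1) / 2 * (n ^ y / y.factorial)) := by gcongr
    _ ≤ _ := by
      field_simp
      calc (n : ℝ) * (y + 1) ^ 2 * n ^ y * (y + 1 + 1)
          = ((y : ℝ) + 1) ^ 2 * (y + 2) * n ^ (y + 1) := by ring
        _ ≤ ((y : ℝ) + 2) ^ 3 * n ^ (y + 1) := by gcongr; nlinarith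

theorem choose_mul_choose_mul_choose_le_cliqueWeight_sq {n x : ℕ} (hx : 2 ≤ x) (hn : 0 < n) :
    (n.choose x : ℝ) * ((x.choose 2 * (n - 2).choose (x - 2) : ℕ) : ℝ) ≤
      2 * (cliqueWeight n x / 2) ^ 2 := by
  have hn' : (0 : ℝ) < n := by exact_mod_cast hn
  have hx' : (0 : ℝ) < x := by exact_mod_cast (by omega : 0 < x)
  have hw := cliqueWeight_nonneg n x
  refine le_of_mul_le_mul_left ?_ (by positivity : (0 : ℝ) < 2 * n * x ^ 2)
  calc 2 * n * x ^ 2 * ((n.choose x : ℝ) * ((x.choose 2 * (n - 2).choose (x - 2) : ℕ) : ℝ))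
      = (x ^ 2 * n.choose x) * (2 * n * ((x.choose 2 * (n - 2).choose (x - 2) : ℕ) : ℝ)) := by
        ring
    _ ≤ (n * cliqueWeight n x) * (x ^ 2 * cliqueWeight n x) :=
        mul_le_mul (sq_mul_choose_le_cliqueWeight (by omega))
          (two_mul_mul_choose_mul_choose_le_cliqueWeight hx) (by positivity) (by positivity)
    _ = 2 * n * x ^ 2 * (2 * (cliqueWeight n x / 2) ^ 2) := by ring

theorem mul_choose_mul_choose_le_half_cliqueWeight {n x q k : ℕ} (hx : 2 ≤ x)
    (hn : q * x ^ 2 ≤ n) (hn0 : 0 < n) (hkq : k ≤ q) :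
    (k : ℝ) * ((x.choose 2 * (n - 2).choose (x - 2) : ℕ) : ℝ) ≤ cliqueWeight n x / 2 := by
  have hn' : (0 : ℝ) < n := by exact_mod_cast hn0
  have hqn : (q : ℝ) * x ^ 2 ≤ n := by exact_mod_cast hn
  have hkq' : (k : ℝ) ≤ q := by exact_mod_cast hkq
  have hw := cliqueWeight_nonneg n x
  refine le_of_mul_le_mul_left ?_ (by positivity : (0 : ℝ) < 2 * n)
  calc 2 * n * ((k : ℝ) * ((x.choose 2 * (n - 2).choose (x - 2) : ℕ) : ℝ))
      = k * (2 * n * ((x.choose 2 * (n - 2).choose (x - 2) : ℕ) : ℝ)) := by ring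
    _ ≤ q * (x ^ 2 * cliqueWeight n x) :=
        mul_le_mul hkq' (two_mul_mul_choose_mul_choose_le_cliqueWeight hx) (by positivity)
          (by positivity)
    _ ≤ n * cliqueWeight n x := by rw [← mul_assoc]; gcongr
    _ = 2 * n * (cliqueWeight n x / 2) := by ring

theorem card_treeSeqs_sharesTwo_le {n x q : ℕ} (hx : 2 ≤ x) (hn : q * x ^ 2 ≤ n) {k : ℕ}
    (hk : 2 ≤ k) (hkq : k ≤ q) :
    (#(treeSeqs SharesTwo (powersetCard x (univ : Finset (Fin n))) k) : ℝ) ≤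
      2 * (cliqueWeight n x / 2) ^ k := by
  have hn0 : 0 < n := (Nat.mul_pos (by omega) (by positivity) : 0 < q * x ^ 2).trans_le hn
  have hD : ∀ V ∈ powersetCard x (univ : Finset (Fin n)),
      #((powersetCard x univ).filter (SharesTwo V)) ≤ x.choose 2 * (n - 2).choose (x - 2) :=
    fun V hV => by simpa [mem_powersetCard_univ.1 hV] using card_filter_sharesTwo_le V x
  induction k, hk using Nat.le_induction with
  | base =>
    have h2 := (card_treeSeqs_succ_le hD one_pos).trans
      (Nat.mul_le_mul_right _ (card_treeSeqs_one_le _))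
    rw [card_powersetCard, card_univ, Fintype.card_fin, one_mul] at h2
    exact (Nat.cast_le.2 h2).trans
      (by exact_mod_cast choose_mul_choose_mul_choose_le_cliqueWeight_sq hx hn0)
  | succ k hk ih =>
    calc (#(treeSeqs SharesTwo (powersetCard x univ) (k + 1)) : ℝ)
        ≤ #(treeSeqs SharesTwo (powersetCard x univ) k) *
            (k * ((x.choose 2 * (n - 2).choose (x - 2) : ℕ) : ℝ)) := by
          exact_mod_cast card_treeSeqs_succ_le hD (by omega)
      _ ≤ 2 * (cliqueWeight n x / 2) ^ k * (cliqueWeight n x / 2) := by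
          have hw := cliqueWeight_nonneg n x
          exact mul_le_mul (ih (by omega))
            (mul_choose_mul_choose_le_half_cliqueWeight hx hn hn0 (by omega)) (by positivity)
            (by positivity)
      _ = 2 * (cliqueWeight n x / 2) ^ (k + 1) := by ring

theorem overlapping_clique_multiset_count_general (x q n : ℕ) (hx : 2 ≤ x)
    (hn : x ^ 2 * q * (q + 2) ≤ n) :
    (Nat.card {S : Multiset (Finset (Fin n)) //
        Multiset.card S = q ∧
        (∀ V ∈ S, V.card = x) ∧
        (∀ V ∈ S, ∃ W ∈ S.erase V, 2 ≤ (V ∩ W).card)} : ℝ)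
      ≤ 2 * (n : ℝ) ^ (x * q - q) * ((x : ℝ) ^ 2 / (Nat.factorial x : ℝ)) ^ q := by
  have hcard : Nat.card {S : Multiset (Finset (Fin n)) //
      Multiset.card S = q ∧ (∀ V ∈ S, V.card = x) ∧
        (∀ V ∈ S, ∃ W ∈ S.erase V, 2 ≤ (V ∩ W).card)} =
      Nat.card (linkedMultisets (powersetCard x univ) SharesTwo q) :=
    Nat.card_congr <| Equiv.subtypeEquivRight fun S => by
      simp [linkedMultisets, IsLinked, SharesTwo]
  have hqn : q * x ^ 2 ≤ n :=
    calc q * x ^ 2 = x ^ 2 * q * 1 := by ring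
      _ ≤ x ^ 2 * q * (q + 2) := Nat.mul_le_mul_left _ (by omega)
      _ ≤ n := hn
  have hbound := card_linkedMultisets_le_pow (powersetCard x univ) (cliqueWeight_nonneg n x)
    (fun k hk hkq => card_treeSeqs_sharesTwo_le hx hqn hk hkq) q le_rfl
  have hw : cliqueWeight n x ^ q = (n : ℝ) ^ (x * q - q) * ((x : ℝ) ^ 2 / x.factorial) ^ q := by
    rw [cliqueWeight, mul_pow, ← pow_mul, Nat.sub_one_mul]
  rw [hcard]
  linarith [pow_nonneg (cliqueWeight_nonneg n x) q]

/-- Let `x ≥ 2`, `q ≥ 1`, and `n ≥ x²·q·(q+2)`. The number of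
multisets `S = {V₁,…,V_q}` of cardinality `q` whose elements are `x`-element subsets of
`[n]`, such that for every `j` there is an `i ≠ j` with `|V_i ∩ V_j| ≥ 2` (equivalently:
every member `V` of `S` shares at least two vertices with some other member of `S`,
counted with multiplicity), is at most `2·n^{xq−q}·(x²/x!)^q`. -/
theorem overlapping_clique_multiset_count (x q n : ℕ) (hx : 2 ≤ x) (hq : 1 ≤ q)
    (hn : x ^ 2 * q * (q + 2) ≤ n) :
    (Nat.card {S : Multiset (Finset (Fin n)) //
        Multiset.card S = q ∧
        (∀ V ∈ S, V.card = x) ∧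
        (∀ V ∈ S, ∃ W ∈ S.erase V, 2 ≤ (V ∩ W).card)} : ℝ)
      ≤ 2 * (n : ℝ) ^ (x * q - q) * ((x : ℝ) ^ 2 / (Nat.factorial x : ℝ)) ^ q :=
  overlapping_clique_multiset_count_general x q n hx hn
end
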